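/- arXiv:1009.3956 — 6 statements merged into one kernel-verified Lean document; each statement's English description precedes it below -/
import Mathlib

section
/- Let x > 0 be real, let n₀ ≥ 1, a ≥ 1, q ≥ 1, r be integers with 0 ≤ r < q, and let Q be a real with q ≤ Q ≤ n₀ · x^{−1/3}. Suppose |x/n₀² − a/q| ≤ 1/(qQ). Then |x/(n₀ + r) − (x/n₀ − a·r/q)| ≤ 2/q. -/
/-!
Expanding `x/(n₀ + r)` to first order around `n₀` gives, exactly,
`x/(n₀ + r) = x/n₀ - r·x/n₀² + x·r²/(n₀²(n₀ + r))`.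
Replacing the slope `x/n₀²` by `a/q` costs at most `r/(qQ) < 1/q`, and the remainder is at most
`x·q²/n₀³ ≤ 1/q`, because `q ≤ Q ≤ n₀ x^{-1/3}` means `q³x ≤ n₀³`.
-/

lemma cube_mul_le_cube_of_le_mul_rpow_neg_third {x q n : ℝ} (hx : 0 < x) (hq : 0 ≤ q)
    (h : q ≤ n * x ^ (-(1/3) : ℝ)) : q ^ 3 * x ≤ n ^ 3 := by
  have hroot : 0 < x ^ (1/3 : ℝ) := Real.rpow_pos_of_pos hx _
  have hcube : (x ^ (1/3 : ℝ)) ^ 3 = x := by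
    rw [← Real.rpow_natCast, ← Real.rpow_mul hx.le]
    norm_num
  have hlin : q * x ^ (1/3 : ℝ) ≤ n := by
    rwa [Real.rpow_neg hx.le, ← div_eq_mul_inv, le_div_iff₀ hroot] at h
  calc q ^ 3 * x = (q * x ^ (1/3 : ℝ)) ^ 3 := by rw [mul_pow, hcube]
    _ ≤ n ^ 3 := pow_le_pow_left₀ (by positivity) hlin 3

lemma div_add_eq_sub_mul_add_remainder {K : Type*} [Field K] {x n r : K} (hn : n ≠ 0)
    (hnr : n + r ≠ 0) :
    x / (n + r) = x / n - r * (x / n ^ 2) + x * r ^ 2 / (n ^ 2 * (n + r)) := by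
  field_simp
  ring

lemma abs_mul_sub_le_one_div {r q Q s t : ℝ} (hr : 0 ≤ r) (hQ : 0 < Q) (hrQ : r ≤ Q)
    (hst : |s - t| ≤ 1 / (q * Q)) : |r * (s - t)| ≤ 1 / q := by
  calc |r * (s - t)| = r * |s - t| := by rw [abs_mul, abs_of_nonneg hr]
    _ ≤ Q * (1 / (q * Q)) := mul_le_mul hrQ hst (abs_nonneg _) hQ.le
    _ = 1 / q := by field_simp

lemma mul_sq_div_sq_mul_add_le_one_div {x n r q : ℝ} (hx : 0 ≤ x) (hn : 0 < n) (hr : 0 ≤ r) (hq : 0 < q)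
    (hrq : r ≤ q) (hcube : q ^ 3 * x ≤ n ^ 3) : x * r ^ 2 / (n ^ 2 * (n + r)) ≤ 1 / q := by
  rw [div_le_div_iff₀ (by positivity) hq, one_mul]
  have hr2 : r ^ 2 * q ≤ q ^ 3 := by nlinarith [mul_le_mul hrq hrq hr hq.le]
  calc x * r ^ 2 * q = x * (r ^ 2 * q) := by ring
    _ ≤ x * q ^ 3 := mul_le_mul_of_nonneg_left hr2 hx
    _ ≤ n ^ 3 := by linarith
    _ ≤ n ^ 2 * (n + r) := by nlinarith [sq_nonneg n]

theorem linear_approximation_bound_general (x : ℝ) (hx : 0 < x) (n₀ a q r : ℤ)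
    (hn₀ : 1 ≤ n₀) (hq : 1 ≤ q) (hr0 : 0 ≤ r) (hrq : r < q)
    (Q : ℝ) (hqQ : (q : ℝ) ≤ Q) (hQ : Q ≤ (n₀ : ℝ) * x ^ (-(1/3) : ℝ))
    (happ : |x / (n₀ : ℝ) ^ 2 - (a : ℝ) / (q : ℝ)| ≤ 1 / ((q : ℝ) * Q)) :
    |x / ((n₀ : ℝ) + (r : ℝ)) - (x / (n₀ : ℝ) - (a : ℝ) * (r : ℝ) / (q : ℝ))| ≤
      2 / (q : ℝ) := by
  have hn : (0 : ℝ) < n₀ := by exact_mod_cast hn₀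
  have hq' : (0 : ℝ) < q := by exact_mod_cast hq
  have hr : (0 : ℝ) ≤ r := by exact_mod_cast hr0
  have hrq' : (r : ℝ) ≤ q := by exact_mod_cast hrq.le
  have hcube : (q : ℝ) ^ 3 * x ≤ (n₀ : ℝ) ^ 3 :=
    cube_mul_le_cube_of_le_mul_rpow_neg_third hx hq'.le (hqQ.trans hQ)
  have hslope := abs_mul_sub_le_one_div hr (hq'.trans_le hqQ) (hrq'.trans hqQ) happ
  have hrem := mul_sq_div_sq_mul_add_le_one_div hx.le hn hr hq' hrq' hcube
  rw [div_add_eq_sub_mul_add_remainder hn.ne' (by positivity)]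
  calc _ = |x * (r : ℝ) ^ 2 / ((n₀ : ℝ) ^ 2 * (n₀ + r)) - r * (x / (n₀ : ℝ) ^ 2 - a / q)| := by
        congr 1; ring
    _ ≤ 1 / q + 1 / q := by
        refine (abs_sub _ _).trans (add_le_add ?_ hslope)
        rwa [abs_of_nonneg (by positivity)]
    _ = 2 / q := by ring

/-- If `|x/n₀² − a/q| ≤ 1/(qQ)` with `0 ≤ r < q ≤ Q ≤ n₀ x^{−1/3}`, then
`|x/(n₀+r) − (x/n₀ − ar/q)| ≤ 2/q`. -/
theorem linear_approximation_bound (x : ℝ) (hx : 0 < x) (n₀ a q r : ℤ)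
    (hn₀ : 1 ≤ n₀) (ha : 1 ≤ a) (hq : 1 ≤ q) (hr0 : 0 ≤ r) (hrq : r < q)
    (Q : ℝ) (hqQ : (q : ℝ) ≤ Q) (hQ : Q ≤ (n₀ : ℝ) * x ^ (-(1/3) : ℝ))
    (happ : |x / (n₀ : ℝ) ^ 2 - (a : ℝ) / (q : ℝ)| ≤ 1 / ((q : ℝ) * Q)) :
    |x / ((n₀ : ℝ) + (r : ℝ)) - (x / (n₀ : ℝ) - (a : ℝ) * (r : ℝ) / (q : ℝ))| ≤
      2 / (q : ℝ) :=
  linear_approximation_bound_general x hx n₀ a q r hn₀ hq hr0 hrq Q hqQ hQ happ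
end

section
/- Let q ≥ 1 and a be integers with gcd(a,q) = 1, let y be a real number, and let α₀, …, α_{q−1} be real numbers such that |α_r − (y − a·r/q)| ≤ 2/q for every r ∈ {0, …, q−1}. Then the number of r ∈ {0, …, q−1} with ⌊α_r⌋ ≠ ⌊y − a·r/q⌋ is at most 5. -/
/-! If `⌊α_r⌋ ≠ ⌊x_r⌋` with `x_r = y - ar/q` and `|α_r - x_r| ≤ 2/q`, then `x_r` lies within `2/q`
of an integer, so `⌊q x_r⌋ = ⌊qy⌋ - ar` is congruent to one of `0, 1, -2, -1` modulo `q`. Since `a`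
is invertible modulo `q`, the residues `(⌊qy⌋ - ar) mod q` for `0 ≤ r < q` are pairwise distinct,
so at most four `r` can be exceptional. -/

namespace Int

variable {K : Type*} [Field K] [LinearOrder K] [IsStrictOrderedRing K] [FloorRing K]

theorem fract_lt_or_one_sub_le_fract_of_floor_ne {x α ε : K} (hαx : |α - x| ≤ ε)
    (hne : ⌊α⌋ ≠ ⌊x⌋) : fract x < ε ∨ 1 - ε ≤ fract x := by
  rw [abs_le] at hαx
  rw [fract]
  rcases hne.lt_or_gt with h | h
  · have : α < ⌊x⌋ := floor_lt.mp h
    left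
    linarith
  · have : (⌊x⌋ : K) + 1 ≤ α := by exact_mod_cast le_floor.mp h
    right
    linarith

theorem floor_intCast_mul_emod {q : ℤ} (hq : 0 < q) (x : K) :
    ⌊(q : K) * x⌋ % q = ⌊(q : K) * fract x⌋ := by
  have hq' : (0 : K) < q := by exact_mod_cast hq
  have hsplit : (q : K) * x = q * fract x + ((q * ⌊x⌋ : ℤ) : K) := by
    push_cast
    rw [fract]
    ring
  rw [hsplit, floor_add_intCast, add_mul_emod_self_left]
  have := fract_nonneg x
  have := fract_lt_one x
  exact emod_eq_of_lt (floor_nonneg.mpr (by positivity)) (floor_lt.mpr (by nlinarith))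

theorem floor_intCast_mul_fract_mem {q : ℤ} (hq : 0 < q) {x : K}
    (hx : fract x < 2 / q ∨ 1 - 2 / q ≤ fract x) :
    ⌊(q : K) * fract x⌋ ∈ ({0, 1, q - 2, q - 1} : Finset ℤ) := by
  have hq' : (0 : K) < q := by exact_mod_cast hq
  have h0 : 0 ≤ ⌊(q : K) * fract x⌋ := floor_nonneg.mpr (by have := fract_nonneg x; positivity)
  have h1 : ⌊(q : K) * fract x⌋ < q := floor_lt.mpr (by have := fract_lt_one x; nlinarith)
  simp only [Finset.mem_insert, Finset.mem_singleton]
  rcases hx with hx | hx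
  · have : ⌊(q : K) * fract x⌋ < 2 := by
      rw [floor_lt, ← lt_div_iff₀' hq']
      exact_mod_cast hx
    omega
  · have : q - 2 ≤ ⌊(q : K) * fract x⌋ := by
      rw [le_floor, ← div_le_iff₀' hq']
      push_cast
      rwa [sub_div, div_self hq'.ne']
    omega

theorem floor_intCast_mul_sub_div {q : ℤ} (hq : q ≠ 0) (y : K) (m : ℤ) :
    ⌊(q : K) * (y - m / q)⌋ = ⌊(q : K) * y⌋ - m := by
  rw [mul_sub, mul_div_cancel₀ _ (by exact_mod_cast hq), floor_sub_intCast]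

theorem injOn_emod_sub_mul {a q : ℤ} (h : IsCoprime a q) (M : ℤ) :
    Set.InjOn (fun r => (M - a * r) % q) (Set.Ico 0 q) := by
  intro r₁ h₁ r₂ h₂ heq
  have hdvd : q ∣ a * (r₂ - r₁) := by
    convert (Int.ModEq.dvd heq.symm) using 1
    ring
  have := eq_zero_of_dvd_of_natAbs_lt_natAbs (h.symm.dvd_of_dvd_mul_left hdvd)
    (by simp only [Set.mem_Ico] at h₁ h₂; omega)
  omega

end Int

/-- If `gcd(a,q) = 1` and `|α_r − (y − ar/q)| ≤ 2/q` for `0 ≤ r < q`, then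
`⌊α_r⌋ ≠ ⌊y − ar/q⌋` for at most `5` values of `r`. -/
theorem few_floor_discrepancies (q : ℤ) (hq : 1 ≤ q) (a : ℤ) (hgcd : Int.gcd a q = 1)
    (y : ℝ) (α : ℤ → ℝ)
    (hα : ∀ r ∈ Finset.Ico (0 : ℤ) q, |α r - (y - (a : ℝ) * (r : ℝ) / (q : ℝ))| ≤ 2 / (q : ℝ)) :
    ((Finset.Ico (0 : ℤ) q).filter
        (fun r => ⌊α r⌋ ≠ ⌊y - (a : ℝ) * (r : ℝ) / (q : ℝ)⌋)).card ≤ 5 := by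
  have hq0 : 0 < q := by omega
  have hfloor (r : ℤ) : ⌊(q : ℝ) * (y - a * r / q)⌋ = ⌊(q : ℝ) * y⌋ - a * r := by
    exact_mod_cast Int.floor_intCast_mul_sub_div hq0.ne' y (a * r)
  calc _ ≤ ({0, 1, q - 2, q - 1} : Finset ℤ).card := by
        refine Finset.card_le_card_of_injOn (fun r => (⌊(q : ℝ) * y⌋ - a * r) % q) ?_ ?_
        · intro r hr
          rw [Finset.mem_coe, Finset.mem_filter] at hr
          dsimp only
          rw [Finset.mem_coe, ← hfloor, Int.floor_intCast_mul_emod hq0]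
          exact Int.floor_intCast_mul_fract_mem hq0
            (Int.fract_lt_or_one_sub_le_fract_of_floor_ne (hα r hr.1) hr.2)
        · refine (Int.injOn_emod_sub_mul (Int.isCoprime_iff_gcd_eq_one.mpr hgcd) _).mono ?_
          intro r hr
          simpa using (Finset.mem_filter.mp hr).1
    _ ≤ 5 := Finset.card_le_four.trans (by norm_num)
end

section
/- Let a, b be reals with 1 ≤ a < b. Then in the polynomial ring ℤ[t]: Σ_{(n,m) : n,m ≥ 1, a < nm ≤ b} t^{nm} = 2 Σ_{n : 1 ≤ n ≤ √b} Σ_{m : a/n < m ≤ b/n} t^{nm} − Σ_{n : 1 ≤ n ≤ √b} Σ_{m : a/n < m ≤ √b} t^{nm}, where all sums range over positive integers (or pairs of positive integers) satisfying the indicated conditions. -/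
/-!
Dirichlet's hyperbola method: a pair `(n, m)` with `n * m ≤ b` has `n ≤ ⌊√b⌋` or `m ≤ ⌊√b⌋`.
By inclusion–exclusion over these two overlapping parts, and the symmetry `(n, m) ↦ (m, n)` that
exchanges them, the sum over the region is twice the sum over the part with `n ≤ ⌊√b⌋` minus the
sum over the square where both coordinates are at most `⌊√b⌋`.
-/

open Finset Polynomial

theorem Finset.sum_eq_two_nsmul_sum_filter_fst_sub {α M : Type*} [AddCommGroup M]
    (S : Finset (α × α)) (P : α → Prop) [DecidablePred P] (f : α × α → M)
    (hS : ∀ p ∈ S, p.swap ∈ S) (hf : ∀ p, f p.swap = f p) (hP : ∀ p ∈ S, P p.1 ∨ P p.2) :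
    ∑ p ∈ S, f p = 2 • ∑ p ∈ S with P p.1, f p - ∑ p ∈ S with P p.1 ∧ P p.2, f p := by
  classical
  have hunion : {p ∈ S | P p.1} ∪ {p ∈ S | P p.2} = S := by
    rw [← filter_or]; exact filter_true_of_mem hP
  have hswap : ∑ p ∈ S with P p.2, f p = ∑ p ∈ S with P p.1, f p := by
    refine sum_equiv (Equiv.prodComm α α) (fun p => ?_) (fun p _ => (hf p).symm)
    simp only [mem_filter, Equiv.prodComm_apply, Prod.fst_swap]
    exact ⟨fun h => ⟨hS p h.1, h.2⟩, fun h => ⟨p.swap_swap ▸ hS _ h.1, h.2⟩⟩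
  have hIE := sum_union_inter (s₁ := {p ∈ S | P p.1}) (s₂ := {p ∈ S | P p.2}) (f := f)
  rw [hunion, ← filter_and, hswap] at hIE
  rw [two_nsmul, ← hIE, add_sub_cancel_right]

theorem Nat.le_floor_sqrt_iff {n : ℕ} (hn : 0 < n) {b : ℝ} : n ≤ ⌊√b⌋₊ ↔ (n : ℝ) ^ 2 ≤ b := by
  rw [Nat.le_floor_iff (Real.sqrt_nonneg b), Real.le_sqrt' (Nat.cast_pos.2 hn)]

theorem Nat.le_floor_of_mul_le {n m : ℕ} (hn : 0 < n) {b : ℝ} (h : (n * m : ℝ) ≤ b) :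
    m ≤ ⌊b⌋₊ := by
  refine Nat.le_floor (le_trans ?_ h)
  nlinarith [(Nat.one_le_cast (α := ℝ)).2 hn, (m.cast_nonneg : (0 : ℝ) ≤ m)]

theorem Nat.le_floor_sqrt_or_le_floor_sqrt_of_mul_le {n m : ℕ} (hn : 0 < n) (hm : 0 < m)
    {b : ℝ} (h : (n * m : ℝ) ≤ b) : n ≤ ⌊√b⌋₊ ∨ m ≤ ⌊√b⌋₊ := by
  rw [Nat.le_floor_sqrt_iff hn, Nat.le_floor_sqrt_iff hm]
  rcases le_total (n : ℝ) m with hnm | hmn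
  · left; nlinarith [(n.cast_nonneg : (0 : ℝ) ≤ n)]
  · right; nlinarith [(m.cast_nonneg : (0 : ℝ) ≤ m)]

theorem Nat.mul_le_of_le_floor_sqrt {n m : ℕ} (hn : 0 < n) (hm : 0 < m) {b : ℝ}
    (hnb : n ≤ ⌊√b⌋₊) (hmb : m ≤ ⌊√b⌋₊) : (n * m : ℝ) ≤ b := by
  rw [Nat.le_floor_sqrt_iff hn] at hnb
  rw [Nat.le_floor_sqrt_iff hm] at hmb
  rcases le_total (n : ℝ) m with hnm | hmn
  · nlinarith [(n.cast_nonneg : (0 : ℝ) ≤ n)]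
  · nlinarith [(m.cast_nonneg : (0 : ℝ) ≤ m)]

noncomputable def hyperbolaRegion (a b : ℝ) : Finset (ℕ × ℕ) :=
  (Icc 1 ⌊b⌋₊ ×ˢ Icc 1 ⌊b⌋₊).filter
    (fun p => a < ((p.1 * p.2 : ℕ) : ℝ) ∧ ((p.1 * p.2 : ℕ) : ℝ) ≤ b)

section hyperbolaRegion

variable {a b : ℝ}

theorem mem_hyperbolaRegion {p : ℕ × ℕ} :
    p ∈ hyperbolaRegion a b ↔
      0 < p.1 ∧ 0 < p.2 ∧ a < (p.1 * p.2 : ℝ) ∧ (p.1 * p.2 : ℝ) ≤ b := by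
  simp only [hyperbolaRegion, mem_filter, mem_product, mem_Icc, Nat.cast_mul,
    Nat.one_le_iff_ne_zero, ← Nat.pos_iff_ne_zero]
  refine ⟨by tauto, fun ⟨hn, hm, hlo, hhi⟩ => ⟨⟨⟨hn, ?_⟩, hm, ?_⟩, hlo, hhi⟩⟩
  · exact Nat.le_floor_of_mul_le hm (by rwa [mul_comm])
  · exact Nat.le_floor_of_mul_le hn hhi

theorem swap_mem_hyperbolaRegion {p : ℕ × ℕ} (hp : p ∈ hyperbolaRegion a b) :
    p.swap ∈ hyperbolaRegion a b := by
  rw [mem_hyperbolaRegion] at hp ⊢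
  simp only [Prod.fst_swap, Prod.snd_swap, mul_comm (p.2 : ℝ)]
  tauto

theorem sum_hyperbolaRegion_filter_fst_le {M : Type*} [AddCommMonoid M] (f : ℕ × ℕ → M) :
    ∑ p ∈ hyperbolaRegion a b with p.1 ≤ ⌊√b⌋₊, f p =
      ∑ n ∈ Icc 1 ⌊√b⌋₊, ∑ m ∈ (Icc 1 ⌊b⌋₊).filter
        (fun m : ℕ => a / (n : ℝ) < (m : ℝ) ∧ (m : ℝ) ≤ b / (n : ℝ)), f (n, m) := by
  refine sum_finset_product _ _ _ fun ⟨n, m⟩ => ?_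
  simp only [mem_filter, mem_hyperbolaRegion, mem_Icc, Nat.one_le_iff_ne_zero,
    ← Nat.pos_iff_ne_zero]
  rcases Nat.eq_zero_or_pos n with rfl | hn
  · simp
  have hn' : (0 : ℝ) < n := Nat.cast_pos.2 hn
  rw [div_lt_iff₀' hn', le_div_iff₀' hn']
  exact ⟨fun ⟨⟨_, hm, hlo, hhi⟩, hnr⟩ => ⟨⟨hn, hnr⟩, ⟨hm, Nat.le_floor_of_mul_le hn hhi⟩, hlo, hhi⟩,
    fun ⟨⟨_, hnr⟩, ⟨hm, _⟩, hlo, hhi⟩ => ⟨⟨hn, hm, hlo, hhi⟩, hnr⟩⟩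

theorem sum_hyperbolaRegion_filter_le_floor_sqrt {M : Type*} [AddCommMonoid M] (f : ℕ × ℕ → M) :
    ∑ p ∈ hyperbolaRegion a b with p.1 ≤ ⌊√b⌋₊ ∧ p.2 ≤ ⌊√b⌋₊, f p =
      ∑ n ∈ Icc 1 ⌊√b⌋₊, ∑ m ∈ (Icc 1 ⌊√b⌋₊).filter (fun m : ℕ => a / (n : ℝ) < (m : ℝ)),
        f (n, m) := by
  refine sum_finset_product _ _ _ fun ⟨n, m⟩ => ?_
  simp only [mem_filter, mem_hyperbolaRegion, mem_Icc, Nat.one_le_iff_ne_zero,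
    ← Nat.pos_iff_ne_zero]
  rcases Nat.eq_zero_or_pos n with rfl | hn
  · simp
  rw [div_lt_iff₀' (Nat.cast_pos.2 hn)]
  exact ⟨fun ⟨⟨_, hm, hlo, _⟩, hnr, hmr⟩ => ⟨⟨hn, hnr⟩, ⟨hm, hmr⟩, hlo⟩,
    fun ⟨⟨_, hnr⟩, ⟨hm, hmr⟩, hlo⟩ =>
      ⟨⟨hn, hm, hlo, Nat.mul_le_of_le_floor_sqrt hn hm hnr hmr⟩, hnr, hmr⟩⟩

end hyperbolaRegion

theorem hyperbola_polynomial_identity_general (a b : ℝ) :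
    ∑ p ∈ (Finset.Icc 1 ⌊b⌋₊ ×ˢ Finset.Icc 1 ⌊b⌋₊).filter
        (fun p => a < ((p.1 * p.2 : ℕ) : ℝ) ∧ ((p.1 * p.2 : ℕ) : ℝ) ≤ b),
      (X : ℤ[X]) ^ (p.1 * p.2) =
      2 * ∑ n ∈ Finset.Icc 1 ⌊Real.sqrt b⌋₊,
          ∑ m ∈ (Finset.Icc 1 ⌊b⌋₊).filter
            (fun m : ℕ => a / (n : ℝ) < (m : ℝ) ∧ (m : ℝ) ≤ b / (n : ℝ)),
          (X : ℤ[X]) ^ (n * m)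
      - ∑ n ∈ Finset.Icc 1 ⌊Real.sqrt b⌋₊,
          ∑ m ∈ (Finset.Icc 1 ⌊Real.sqrt b⌋₊).filter
            (fun m : ℕ => a / (n : ℝ) < (m : ℝ)),
          (X : ℤ[X]) ^ (n * m) := by
  have key := sum_eq_two_nsmul_sum_filter_fst_sub (hyperbolaRegion a b) (· ≤ ⌊√b⌋₊)
    (fun p => (X : ℤ[X]) ^ (p.1 * p.2)) (fun _ => swap_mem_hyperbolaRegion)
    (fun p => by rw [Prod.fst_swap, Prod.snd_swap, mul_comm])
    (fun p hp => by
      obtain ⟨hn, hm, -, hle⟩ := mem_hyperbolaRegion.1 hp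
      exact Nat.le_floor_sqrt_or_le_floor_sqrt_of_mul_le hn hm hle)
  rwa [sum_hyperbolaRegion_filter_fst_le, sum_hyperbolaRegion_filter_le_floor_sqrt,
    two_nsmul, ← two_mul] at key

open Polynomial in
/-- For reals `1 ≤ a < b`, in `ℤ[t]`:
`∑_{a < nm ≤ b} t^{nm} = 2 ∑_{n ≤ √b} ∑_{a/n < m ≤ b/n} t^{nm} − ∑_{n ≤ √b} ∑_{a/n < m ≤ √b} t^{nm}`. -/
theorem hyperbola_polynomial_identity (a b : ℝ) (ha : 1 ≤ a) (hab : a < b) :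
    ∑ p ∈ (Finset.Icc 1 ⌊b⌋₊ ×ˢ Finset.Icc 1 ⌊b⌋₊).filter
        (fun p => a < ((p.1 * p.2 : ℕ) : ℝ) ∧ ((p.1 * p.2 : ℕ) : ℝ) ≤ b),
      (X : ℤ[X]) ^ (p.1 * p.2) =
      2 * ∑ n ∈ Finset.Icc 1 ⌊Real.sqrt b⌋₊,
          ∑ m ∈ (Finset.Icc 1 ⌊b⌋₊).filter
            (fun m : ℕ => a / (n : ℝ) < (m : ℝ) ∧ (m : ℝ) ≤ b / (n : ℝ)),
          (X : ℤ[X]) ^ (n * m)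
      - ∑ n ∈ Finset.Icc 1 ⌊Real.sqrt b⌋₊,
          ∑ m ∈ (Finset.Icc 1 ⌊Real.sqrt b⌋₊).filter
            (fun m : ℕ => a / (n : ℝ) < (m : ℝ)),
          (X : ℤ[X]) ^ (n * m) :=
  hyperbola_polynomial_identity_general a b
end

section
/- Define τ₂(n) as the number of ordered triples (a,b,c) of positive integers with abc = n, and for n ≥ 1 let h(n) := Σ_{d : d³ ∣ n} μ(d) τ₂(n/d³), where d ranges over positive integers with d³ dividing n. Then for every integer n ≥ 2: if n = p^k for some prime p and integer k ≥ 1, then h(n) = 3k; otherwise, 9 divides h(n). -/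
/-!
With `τ₂ = ζ * σ₀`, the sum is the Dirichlet convolution of `τ₂` with the Möbius function
transported to cubes (`d³ ↦ μ d`, zero off cubes), so it is multiplicative. At `p ^ k` only
`d = 1` and `d = p` contribute, giving `C(k+2, 2) - C(k-1, 2) = 3k`. Hence `3 ^ ω(n)` divides the
sum, and `ω(n) ≥ 2` when `n ≥ 2` is not a prime power.
-/

/-- `τ₂(n)`: the number of ordered triples `(a,b,c)` of positive integers with `abc = n`. -/
noncomputable def tau2 (n : ℕ) : ℕ :=
  ({t : ℕ × ℕ × ℕ | 0 < t.1 ∧ 0 < t.2.1 ∧ 0 < t.2.2 ∧ t.1 * t.2.1 * t.2.2 = n}).ncard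

/-- `h(n) = ∑_{d³ ∣ n} μ(d) τ₂(n/d³)`, summed over positive `d` with `d³ ∣ n`. -/
noncomputable def moebiusTau2Sum (n : ℕ) : ℤ :=
  ∑ d ∈ n.divisors.filter (fun d => d ^ 3 ∣ n),
    ArithmeticFunction.moebius d * (tau2 (n / d ^ 3) : ℤ)

open ArithmeticFunction Finset
open scoped ArithmeticFunction.zeta ArithmeticFunction.Moebius ArithmeticFunction.sigma

namespace ArithmeticFunction

variable {R : Type*}

/-- `expand k f` sends `d ^ k` to `f d` and vanishes off `k`-th powers; the sum has at most one
term. -/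
def expand [AddCommMonoid R] (k : ℕ) (f : ArithmeticFunction R) : ArithmeticFunction R :=
  ⟨fun n => ∑ d ∈ n.divisors with d ^ k = n, f d, by simp⟩

section expand

variable [AddCommMonoid R] {k : ℕ} (f : ArithmeticFunction R)

theorem expand_apply (n : ℕ) : expand k f n = ∑ d ∈ n.divisors with d ^ k = n, f d := rfl

theorem expand_apply_pow (hk : k ≠ 0) (d : ℕ) : expand k f (d ^ k) = f d := by
  rcases eq_or_ne d 0 with rfl | hd
  · simp [zero_pow hk]
  rw [expand_apply, filter_congr (q := (· = d)) fun e _ => (Nat.pow_left_injective hk).eq_iff,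
    filter_eq', if_pos (Nat.mem_divisors.mpr ⟨dvd_pow_self d hk, pow_ne_zero k hd⟩),
    sum_singleton]

theorem expand_apply_of_forall_pow_ne {n : ℕ} (h : ∀ d, d ^ k ≠ n) : expand k f n = 0 :=
  (expand_apply f n).trans <| sum_eq_zero fun d hd => absurd (mem_filter.mp hd).2 (h d)

end expand

theorem IsMultiplicative.expand [Semiring R] {f : ArithmeticFunction R}
    (hf : f.IsMultiplicative) {k : ℕ} (hk : k ≠ 0) : (expand k f).IsMultiplicative := by
  refine ⟨by simpa using expand_apply_pow f hk 1 |>.trans hf.map_one, fun {m n} hmn => ?_⟩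
  have root_of_mul {a b : ℕ} (hab : a.Coprime b) :
      (∃ c, c ^ k = a * b) → ∃ d, d ^ k = a := by
    rintro ⟨c, hc⟩
    obtain ⟨d, hd⟩ := exists_eq_pow_of_mul_eq_pow (Nat.isUnit_iff.mpr hab) hc.symm
    exact ⟨d, hd.symm⟩
  by_cases hpow : (∃ a, a ^ k = m) ∧ ∃ b, b ^ k = n
  · obtain ⟨⟨a, rfl⟩, b, rfl⟩ := hpow
    have hk_pos := Nat.pos_of_ne_zero hk
    rw [← mul_pow, expand_apply_pow f hk, expand_apply_pow f hk, expand_apply_pow f hk,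
      hf.map_mul_of_coprime ((Nat.coprime_pow_left_iff hk_pos _ _).mp
        ((Nat.coprime_pow_right_iff hk_pos _ _).mp hmn))]
  have hmn_pow : ∀ c, c ^ k ≠ m * n := fun c hc =>
    hpow ⟨root_of_mul hmn ⟨c, hc⟩, root_of_mul hmn.symm ⟨c, hc.trans (mul_comm m n)⟩⟩
  rw [expand_apply_of_forall_pow_ne f hmn_pow]
  rcases not_and_or.mp hpow with hm | hn
  · rw [expand_apply_of_forall_pow_ne f (not_exists.mp hm), zero_mul]
  · rw [expand_apply_of_forall_pow_ne f (not_exists.mp hn), mul_zero]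

theorem IsMultiplicative.pow_card_primeFactors_dvd [CommMonoidWithZero R]
    {f : ArithmeticFunction R} (hf : f.IsMultiplicative) {a : R}
    (h : ∀ p k, p.Prime → k ≠ 0 → a ∣ f (p ^ k)) {n : ℕ} (hn : n ≠ 0) :
    a ^ n.primeFactors.card ∣ f n := by
  rw [hf.multiplicative_factorization f hn, Finsupp.prod, ← prod_const,
    ← Nat.support_factorization]
  exact prod_dvd_prod_of_dvd _ _ fun p hp => h p _
    (Nat.prime_of_mem_primeFactors (Nat.support_factorization n ▸ hp))
    (Finsupp.mem_support_iff.mp hp)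

end ArithmeticFunction

theorem tau2_eq_zeta_mul_sigma_zero (n : ℕ) : tau2 n = (ζ * σ 0) n := by
  have card_eq (m : ℕ) : #m.divisorsAntidiagonal = σ 0 m := by
    rw [sigma_zero_apply, ← Nat.map_div_right_divisors, card_map]
  rw [zeta_mul_apply, ← Nat.sum_divisorsAntidiagonal' fun _ m => σ 0 m]
  simp only [← card_eq]
  rw [← card_sigma, ← Set.ncard_coe_finset, tau2]
  refine Set.ncard_congr (fun t _ => ⟨(t.1, t.2.1 * t.2.2), (t.2.1, t.2.2)⟩) ?_ ?_ ?_
  · rintro ⟨a, b, c⟩ ⟨ha, hb, hc, rfl⟩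
    simp [mul_assoc, ha.ne', hb.ne', hc.ne']
  · rintro ⟨a, b, c⟩ ⟨a', b', c'⟩ - - h
    simp_all
  · rintro ⟨⟨a, m⟩, ⟨b, c⟩⟩ h
    simp only [coe_sigma, Set.mem_sigma_iff, mem_coe, Nat.mem_divisorsAntidiagonal] at h
    obtain ⟨⟨rfl, hn⟩, rfl, -⟩ := h
    simp only [mul_ne_zero_iff] at hn
    exact ⟨(a, b, c), by simp [Nat.pos_iff_ne_zero, hn, mul_assoc], rfl⟩

theorem two_mul_tau2_prime_pow {p : ℕ} (hp : p.Prime) (k : ℕ) :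
    2 * tau2 (p ^ k) = (k + 1) * (k + 2) := by
  rw [tau2_eq_zeta_mul_sigma_zero, zeta_mul_apply, Nat.sum_divisors_prime_pow hp]
  simp only [sigma_zero_apply_prime_pow hp]
  induction k with
  | zero => rfl
  | succ k ih => rw [sum_range_succ, mul_add, ih]; ring

theorem moebiusTau2Sum_eq_expand_moebius_mul (n : ℕ) :
    moebiusTau2Sum n = (expand 3 μ * ↑(ζ * σ 0 : ArithmeticFunction ℕ)) n := by
  set cubeRoots := n.divisors.filter (fun d => d ^ 3 ∣ n)
  have cube_inj : Set.InjOn (· ^ 3 : ℕ → ℕ) cubeRoots :=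
    (Nat.pow_left_injective three_ne_zero).injOn
  have cubes_sub : cubeRoots.image (· ^ 3) ⊆ n.divisors := by
    simp only [subset_iff, mem_image, mem_filter, Nat.mem_divisors, cubeRoots]
    rintro _ ⟨d, ⟨⟨-, hn⟩, hd⟩, rfl⟩
    exact ⟨hd, hn⟩
  have off_cubes : ∀ x ∈ n.divisors, x ∉ cubeRoots.image (· ^ 3) →
      expand 3 μ x * (ζ * σ 0 : ArithmeticFunction ℕ) (n / x) = 0 := by
    intro x hx hx_cube
    obtain ⟨hxn, hn⟩ := Nat.mem_divisors.mp hx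
    refine mul_eq_zero_of_left (expand_apply_of_forall_pow_ne _ fun d hd => hx_cube ?_) _
    subst hd
    exact mem_image_of_mem _ <| mem_filter.mpr
      ⟨Nat.mem_divisors.mpr ⟨(dvd_pow_self d three_ne_zero).trans hxn, hn⟩, hxn⟩
  rw [mul_apply, Nat.sum_divisorsAntidiagonal fun x y =>
      expand 3 μ x * (↑(ζ * σ 0 : ArithmeticFunction ℕ) : ArithmeticFunction ℤ) y]
  simp only [natCoe_apply]
  rw [← sum_subset cubes_sub off_cubes, sum_image cube_inj]
  exact sum_congr rfl fun d _ => by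
    rw [expand_apply_pow _ three_ne_zero, tau2_eq_zeta_mul_sigma_zero]

theorem moebiusTau2Sum_prime_pow_eq {p k : ℕ} (hp : p.Prime) (hk : k ≠ 0) :
    moebiusTau2Sum (p ^ k) = tau2 (p ^ k) - if 3 ≤ k then (tau2 (p ^ (k - 3)) : ℤ) else 0 := by
  have one_p_sub : {1, p} ⊆ (p ^ k).divisors := by
    rw [insert_subset_iff, singleton_subset_iff]
    exact ⟨Nat.one_mem_divisors.mpr (pow_ne_zero k hp.ne_zero),
      Nat.mem_divisors.mpr ⟨dvd_pow_self p hk, pow_ne_zero k hp.ne_zero⟩⟩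
  have moebius_eq_zero : ∀ d ∈ (p ^ k).divisors, d ∉ ({1, p} : Finset ℕ) → μ d = 0 := by
    intro d hd hd1p
    obtain ⟨i, -, rfl⟩ := (Nat.dvd_prime_pow hp).mp (Nat.dvd_of_mem_divisors hd)
    have hi0 : i ≠ 0 := by rintro rfl; simp at hd1p
    have hi1 : i ≠ 1 := by rintro rfl; simp at hd1p
    rw [moebius_apply_prime_pow hp hi0, if_neg hi1]
  rw [moebiusTau2Sum, sum_filter, ← sum_subset one_p_sub fun d hd hd1p => by
      rw [moebius_eq_zero d hd hd1p, zero_mul, ite_self], sum_pair hp.one_lt.ne]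
  simp only [one_pow, one_dvd, if_true, moebius_apply_one, Nat.div_one, one_mul,
    Nat.pow_dvd_pow_iff_le_right hp.one_lt, moebius_apply_prime hp]
  split_ifs with h3
  · rw [Nat.pow_div h3 hp.pos]; ring
  · simp

theorem moebiusTau2Sum_prime_pow {p k : ℕ} (hp : p.Prime) (hk : k ≠ 0) :
    moebiusTau2Sum (p ^ k) = 3 * k := by
  have tau2_pk : (2 * tau2 (p ^ k) : ℤ) = (k + 1) * (k + 2) := by
    exact_mod_cast two_mul_tau2_prime_pow hp k
  rw [moebiusTau2Sum_prime_pow_eq hp hk]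
  split_ifs with h3
  · obtain ⟨j, rfl⟩ : ∃ j, k = j + 3 := ⟨k - 3, by omega⟩
    have tau2_pj : (2 * tau2 (p ^ j) : ℤ) = (j + 1) * (j + 2) := by
      exact_mod_cast two_mul_tau2_prime_pow hp j
    rw [Nat.add_sub_cancel]
    push_cast at tau2_pk ⊢
    linarith
  · obtain rfl | rfl : k = 1 ∨ k = 2 := by omega
    all_goals push_cast at tau2_pk ⊢; linarith

/-- For `n ≥ 2`: if `n = p^k` is a prime power then `h(n) = 3k`, and otherwise `9 ∣ h(n)`. -/
theorem moebiusTau2Sum_prime_power_or_not (n : ℕ) (hn : 2 ≤ n) :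
    (∀ p k : ℕ, p.Prime → 1 ≤ k → n = p ^ k → moebiusTau2Sum n = 3 * (k : ℤ)) ∧
    (¬ (∃ p k : ℕ, p.Prime ∧ 1 ≤ k ∧ n = p ^ k) → (9 : ℤ) ∣ moebiusTau2Sum n) := by
  refine ⟨fun p k hp hk hpk => hpk ▸ moebiusTau2Sum_prime_pow hp (by omega), fun h_not => ?_⟩
  have two_le_card : 2 ≤ n.primeFactors.card := by
    have h_ne_one : n.primeFactors.card ≠ 1 := fun h => by
      obtain ⟨p, k, hp, hk, rfl⟩ :=
        (isPrimePow_nat_iff n).mp (isPrimePow_iff_card_primeFactors_eq_one.mpr h)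
      exact h_not ⟨p, k, hp, hk, rfl⟩
    have := card_pos.mpr (Nat.nonempty_primeFactors.mpr hn)
    omega
  have hmul : (expand 3 μ * ↑(ζ * σ 0 : ArithmeticFunction ℕ)).IsMultiplicative :=
    (isMultiplicative_moebius.expand three_ne_zero).mul
      (isMultiplicative_zeta.mul isMultiplicative_sigma).natCast
  have three_pow_dvd : (3 : ℤ) ^ n.primeFactors.card ∣ moebiusTau2Sum n := by
    rw [moebiusTau2Sum_eq_expand_moebius_mul]
    refine hmul.pow_card_primeFactors_dvd (fun p k hp hk => ?_) (by omega)
    rw [← moebiusTau2Sum_eq_expand_moebius_mul, moebiusTau2Sum_prime_pow hp hk]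
    exact dvd_mul_right 3 _
  exact (pow_dvd_pow 3 two_le_card).trans three_pow_dvd
end

section
/- There exists an absolute constant C > 0 such that for every real x ≥ 2, the set {n ∈ ℕ : 1 ≤ n ≤ √x} can be partitioned into at most C·x^{0.49} arithmetic progressions, such that for each progression P in the partition there exist rational numbers u, v with ⌊x/n⌋ = u·n + v for all n ∈ P. -/
/-!
Take the `n ≤ T ≈ x^0.49` as singletons and cut the rest of `[1, √x]` into blocks of length
`H ≈ x^0.1`. On a block starting at `A`, Dirichlet's theorem gives `q ≤ Q ≈ x^0.02` and an integer
`j` with `|q x / A² - j| ≤ 1 / (Q + 1)`. Along a residue class `n = n₀ + l q` of the block, the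
increments `j - q x / (n (n + q))` of `G l = x / n + j l` are then at most `ε ≈ x^{-0.02}` in size
and increase with `l`, so `G` decreases and then increases. On each monotone stretch of length `L`
the floor `⌊G⌋` takes at most `ε L + 2` values, each on a sub-progression where
`⌊x / n⌋ = c - j l` is affine in `n`. This gives `O(x^0.48)` progressions beyond `T`.
-/

open Finset

def IsFloorLinearAP (x : ℝ) (P : Finset ℕ) : Prop :=
  (∃ n₀ q L : ℕ, 1 ≤ n₀ ∧ 1 ≤ q ∧ P = (range (L + 1)).image (fun l => n₀ + l * q)) ∧
    ∃ u v : ℚ, ∀ n ∈ P, (⌊x / (n : ℝ)⌋ : ℚ) = u * n + v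

def HasFloorLinearPartition (x : ℝ) (s : Finset ℕ) (k : ℝ) : Prop :=
  ∃ F : Finpartition s, (∀ P ∈ F.parts, IsFloorLinearAP x P) ∧ (#F.parts : ℝ) ≤ k

namespace HasFloorLinearPartition

variable {x : ℝ} {s t : Finset ℕ} {k k' : ℝ}

theorem mono (h : HasFloorLinearPartition x s k) (hk : k ≤ k') :
    HasFloorLinearPartition x s k' :=
  let ⟨F, hF, hcard⟩ := h; ⟨F, hF, hcard.trans hk⟩

theorem of_isFloorLinearAP {P : Finset ℕ} (hP : IsFloorLinearAP x P) :
    HasFloorLinearPartition x P 1 := by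
  have hne : P ≠ ∅ := by
    obtain ⟨⟨n₀, q, L, -, -, rfl⟩, -⟩ := hP
    simp
  exact ⟨Finpartition.indiscrete hne, by simpa using hP, by simp⟩

theorem biUnion {ι : Type*} [DecidableEq ι] {I : Finset ι} {s : ι → Finset ℕ} {k : ι → ℝ}
    (hs : (I : Set ι).PairwiseDisjoint s) (h : ∀ i ∈ I, HasFloorLinearPartition x (s i) (k i)) :
    HasFloorLinearPartition x (I.biUnion s) (∑ i ∈ I, k i) := by
  have : ∀ i, ∃ F : Finpartition (s i),
      i ∈ I → (∀ P ∈ F.parts, IsFloorLinearAP x P) ∧ (#F.parts : ℝ) ≤ k i := by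
    intro i
    by_cases hi : i ∈ I
    · obtain ⟨F, hF⟩ := h i hi
      exact ⟨F, fun _ => hF⟩
    · exact ⟨⊥, fun h => absurd h hi⟩
  choose F hF using this
  have hsup := Finset.supIndep_iff_pairwiseDisjoint.2 hs
  refine ⟨(Finpartition.combine F hsup).copy (sup_eq_biUnion I s), ?_, ?_⟩
  · simp only [Finpartition.copy_parts, Finpartition.combine_parts, mem_biUnion]
    rintro P ⟨i, hi, hP⟩
    exact (hF i hi).1 P hP
  · have := Finpartition.sum_combine F hsup (fun _ => (1 : ℝ))
    simp only [sum_const, nsmul_eq_mul, mul_one] at this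
    simp only [Finpartition.copy_parts, this]
    exact sum_le_sum fun i hi => (hF i hi).2

theorem union (hst : Disjoint s t) (hs : HasFloorLinearPartition x s k)
    (ht : HasFloorLinearPartition x t k') : HasFloorLinearPartition x (s ∪ t) (k + k') := by
  have h := biUnion (x := x) (I := univ) (s := fun b : Bool => if b then s else t)
    (k := fun b : Bool => if b then k else k')
    (by rintro (_ | _) - (_ | _) - h <;> simp_all [Function.onFun, hst.symm])
    (by rintro (_ | _) - <;> simpa)
  have hunion : (univ : Finset Bool).biUnion (fun b => if b then s else t) = s ∪ t := by
    ext; simp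
  simpa [hunion, add_comm] using h

theorem fiberwise {ι : Type*} [DecidableEq ι] (f : ℕ → ι) {k : ι → ℝ}
    (h : ∀ i ∈ s.image f, HasFloorLinearPartition x {n ∈ s | f n = i} (k i)) :
    HasFloorLinearPartition x s (∑ i ∈ s.image f, k i) := by
  simpa only [image_biUnion_filter_eq] using biUnion (Set.pairwiseDisjoint_filter f _ s) h

theorem of_forall_one_le (hs : ∀ n ∈ s, 1 ≤ n) : HasFloorLinearPartition x s #s := by
  have h : ∀ n ∈ s, HasFloorLinearPartition x {n} 1 := fun n hn =>
    of_isFloorLinearAP ⟨⟨n, 1, 0, hs n hn, le_rfl, by simp⟩, 0, ⌊x / n⌋, by simp⟩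
  simpa using biUnion (fun a _ b _ hab => disjoint_singleton.2 hab) h

end HasFloorLinearPartition

theorem Finset.eq_Icc_min'_max'_of_ordConnected {S : Finset ℕ} (hS : (S : Set ℕ).OrdConnected)
    (hne : S.Nonempty) : S = Icc (S.min' hne) (S.max' hne) := by
  ext l
  refine ⟨fun hl => mem_Icc.2 ⟨S.min'_le l hl, S.le_max' l hl⟩, fun hl => ?_⟩
  exact hS.out (S.min'_mem hne) (S.max'_mem hne) (by simpa using hl)

theorem card_image_floor_le {α : Type*} {S : Finset α} {G : α → ℝ} {δ : ℝ} (hδ : 0 ≤ δ)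
    (hS : ∀ a ∈ S, ∀ b ∈ S, G a - G b ≤ δ) : (#(S.image fun a => ⌊G a⌋) : ℝ) ≤ δ + 2 := by
  rcases S.eq_empty_or_nonempty with rfl | hne
  · simp only [image_empty, card_empty, Nat.cast_zero]; linarith
  obtain ⟨a, ha, hmin⟩ := S.exists_min_image G hne
  have hsub : S.image (fun a => ⌊G a⌋) ⊆ Icc ⌊G a⌋ ⌊G a + δ⌋ := by
    simp only [subset_iff, mem_image, mem_Icc, forall_exists_index, and_imp]
    rintro _ b hb rfl
    exact ⟨Int.floor_le_floor (hmin b hb), Int.floor_le_floor (by linarith [hS b hb a ha])⟩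
  have hcard : ((#(Icc ⌊G a⌋ ⌊G a + δ⌋) : ℕ) : ℤ) = ⌊G a + δ⌋ + 1 - ⌊G a⌋ := by
    rw [Int.card_Icc, Int.toNat_of_nonneg]
    linarith [Int.floor_le_floor (show G a ≤ G a + δ by linarith)]
  have hfloor : ((⌊G a + δ⌋ - ⌊G a⌋ : ℤ) : ℝ) < δ + 1 := by
    push_cast
    linarith [Int.floor_le (G a + δ), Int.lt_floor_add_one (G a)]
  calc (#(S.image fun a => ⌊G a⌋) : ℝ) ≤ #(Icc ⌊G a⌋ ⌊G a + δ⌋) := by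
        exact_mod_cast card_le_card hsub
    _ = ((⌊G a + δ⌋ - ⌊G a⌋ : ℤ) : ℝ) + 1 := by
        rw [← Int.cast_natCast, hcard]; push_cast; ring
    _ ≤ δ + 2 := by linarith

theorem exists_antitoneOn_monotoneOn {G : ℕ → ℝ} (hG : Monotone fun l => G (l + 1) - G l)
    (K : ℕ) : ∃ m ≤ K, AntitoneOn G (Set.Ico 0 m) ∧ MonotoneOn G (Set.Ico m K) := by
  classical
  have hex : ∃ l, K ≤ l ∨ 0 ≤ G (l + 1) - G l := ⟨K, Or.inl le_rfl⟩
  refine ⟨Nat.find hex, Nat.find_min' hex (Or.inl le_rfl), ?_, ?_⟩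
  · refine antitoneOn_of_add_one_le Set.ordConnected_Ico fun l _ _ hl => ?_
    have := Nat.find_min hex ((Nat.lt_succ_self l).trans (Set.mem_Ico.1 hl).2)
    rw [not_or, not_le, not_le] at this
    linarith [this.2]
  · refine monotoneOn_of_le_add_one Set.ordConnected_Ico fun l _ hl _ => ?_
    have hm := Set.mem_Ico.1 hl
    rcases Nat.find_spec hex with h | h
    · omega
    · linarith [hG hm.1]

theorem abs_sub_le_of_abs_succ_sub_le {G : ℕ → ℝ} {ε : ℝ} {K : ℕ}
    (h : ∀ l, l + 1 < K → |G (l + 1) - G l| ≤ ε) {a b : ℕ} (hab : a ≤ b) (hb : b < K) :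
    |G b - G a| ≤ ε * (b - a) := by
  have := dist_le_Ico_sum_of_dist_le (f := G) hab (d := fun _ => ε) fun hak hkb => by
    rw [Real.dist_eq, abs_sub_comm]; exact h _ (by omega)
  rw [Real.dist_eq, abs_sub_comm, sum_const, Nat.card_Ico, nsmul_eq_mul, Nat.cast_sub hab] at this
  linarith

theorem Set.OrdConnected.inter_preimage_of_monotoneOn {α β : Type*} [Preorder α] [Preorder β]
    {s : Set α} {t : Set β} (hs : s.OrdConnected) (ht : t.OrdConnected) {f : α → β}
    (hf : MonotoneOn f s ∨ AntitoneOn f s) : (s ∩ f ⁻¹' t).OrdConnected := by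
  refine ⟨fun a ha b hb c hc => ?_⟩
  have hcs := hs.out ha.1 hb.1 hc
  refine ⟨hcs, ?_⟩
  rcases hf with hf | hf
  · exact ht.out ha.2 hb.2 ⟨hf ha.1 hcs hc.1, hf hcs hb.1 hc.2⟩
  · exact ht.out hb.2 ha.2 ⟨hf hcs hb.1 hc.2, hf ha.1 hcs hc.1⟩

section Progression

variable {x : ℝ} {n₀ q : ℕ}

theorem progression_injective (hq : 1 ≤ q) : Function.Injective fun l : ℕ => n₀ + l * q :=
  StrictMono.injective fun _ _ h => Nat.add_lt_add_left (Nat.mul_lt_mul_of_pos_right h hq) _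

theorem isFloorLinearAP_image_Icc (hn₀ : 1 ≤ n₀) (hq : 1 ≤ q) {a b : ℕ} (hab : a ≤ b) {j c : ℤ}
    (h : ∀ l ∈ Icc a b, ⌊x / ((n₀ + l * q : ℕ) : ℝ)⌋ + j * l = c) :
    IsFloorLinearAP x ((Icc a b).image fun l => n₀ + l * q) := by
  refine ⟨⟨n₀ + a * q, q, b - a, by omega, hq, ?_⟩, -j / q, c + j * n₀ / q, ?_⟩
  · ext n
    simp only [mem_image, mem_Icc, mem_range]
    constructor
    · rintro ⟨l, ⟨hal, hlb⟩, rfl⟩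
      exact ⟨l - a, by omega, by rw [Nat.sub_mul]; have := Nat.mul_le_mul_right q hal; omega⟩
    · rintro ⟨i, hi, rfl⟩
      exact ⟨a + i, by omega, by rw [Nat.add_mul]; ring⟩
  · simp only [mem_image, forall_exists_index, and_imp]
    rintro _ l hl rfl
    have hfl : ⌊x / ((n₀ + l * q : ℕ) : ℝ)⌋ = c - j * l := by rw [← h l hl]; ring
    have hq0 : (q : ℚ) ≠ 0 := by positivity
    rw [hfl]
    push_cast
    field_simp
    ring

theorem hasFloorLinearPartition_image_Ico (hn₀ : 1 ≤ n₀) (hq : 1 ≤ q) {a b : ℕ} {G : ℕ → ℝ}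
    {j : ℤ} (hG : ∀ l, ⌊G l⌋ = ⌊x / ((n₀ + l * q : ℕ) : ℝ)⌋ + j * l)
    (hmono : MonotoneOn G (Set.Ico a b) ∨ AntitoneOn G (Set.Ico a b)) {δ : ℝ} (hδ : 0 ≤ δ)
    (hspread : ∀ l ∈ Ico a b, ∀ l' ∈ Ico a b, G l - G l' ≤ δ) :
    HasFloorLinearPartition x ((Ico a b).image fun l => n₀ + l * q) (δ + 2) := by
  set fiber : ℤ → Finset ℕ := fun c => {l ∈ Ico a b | ⌊G l⌋ = c}
  have hconn : ∀ c, (fiber c : Set ℕ).OrdConnected := fun c => by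
    have : (fiber c : Set ℕ) = Set.Ico a b ∩ (fun l => ⌊G l⌋) ⁻¹' {c} := by ext; simp [fiber]
    exact this ▸ Set.ordConnected_Ico.inter_preimage_of_monotoneOn Set.ordConnected_singleton
      (hmono.imp Int.floor_mono.comp_monotoneOn Int.floor_mono.comp_antitoneOn)
  have hpiece : ∀ c ∈ (Ico a b).image (fun l => ⌊G l⌋),
      HasFloorLinearPartition x ((fiber c).image fun l => n₀ + l * q) 1 := by
    intro c hc
    have hne : (fiber c).Nonempty := by
      obtain ⟨l, hl, rfl⟩ := mem_image.1 hc
      exact ⟨l, mem_filter.2 ⟨hl, rfl⟩⟩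
    have hIcc := Finset.eq_Icc_min'_max'_of_ordConnected (hconn c) hne
    rw [hIcc]
    refine HasFloorLinearPartition.of_isFloorLinearAP
      (isFloorLinearAP_image_Icc (j := j) (c := c) hn₀ hq (min'_le_max' _ hne) fun l hl => ?_)
    rw [← hIcc] at hl
    rw [← hG]
    exact (mem_filter.1 hl).2
  have hdisj : ((Ico a b).image (fun l => ⌊G l⌋) : Set ℤ).PairwiseDisjoint
      fun c => (fiber c).image fun l => n₀ + l * q := fun c _ c' _ hcc' =>
    (disjoint_image (progression_injective hq)).2
      (Set.pairwiseDisjoint_filter _ Set.univ _ (Set.mem_univ _) (Set.mem_univ _) hcc')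
  have h := HasFloorLinearPartition.biUnion hdisj hpiece
  rw [← biUnion_image, image_biUnion_filter_eq] at h
  refine h.mono ?_
  simpa using card_image_floor_le hδ hspread

theorem hasFloorLinearPartition_progression (hx : 0 ≤ x) (hn₀ : 1 ≤ n₀) (hq : 1 ≤ q) (K : ℕ)
    (j : ℤ) {ε : ℝ} (hε : 0 ≤ ε)
    (hstep : ∀ l, l + 1 < K →
      |j - x * q / (((n₀ + l * q : ℕ) : ℝ) * ((n₀ + l * q : ℕ) + q))| ≤ ε) :
    HasFloorLinearPartition x ((range K).image fun l => n₀ + l * q) (ε * K + 4) := by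
  set n : ℕ → ℝ := fun l => ((n₀ + l * q : ℕ) : ℝ)
  have hn_pos : ∀ l, 0 < n l := fun l => Nat.cast_pos.2 (by omega)
  have hn_mono : Monotone n := fun l l' h => by
    simp only [n]; gcongr
  have hn_succ : ∀ l, n (l + 1) = n l + q := fun l => by simp only [n]; push_cast; ring
  set G : ℕ → ℝ := fun l => x / n l + j * l
  have hG : ∀ l, ⌊G l⌋ = ⌊x / n l⌋ + j * l := fun l => by
    rw [← Int.floor_add_intCast]; push_cast; rfl
  have hstepG : ∀ l, G (l + 1) - G l = j - x * q / (n l * (n l + q)) := fun l => by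
    have := hn_pos l
    simp only [G, hn_succ]
    field_simp
    push_cast
    ring
  have hconv : Monotone fun l => G (l + 1) - G l := fun l l' h => by
    simp only [hstepG]
    have := hn_pos l
    have := hn_mono h
    gcongr
  obtain ⟨m, hmK, hanti, hmono⟩ := exists_antitoneOn_monotoneOn hconv K
  have hspread : ∀ a b, b ≤ K → ∀ l ∈ Ico a b, ∀ l' ∈ Ico a b, G l - G l' ≤ ε * (b - a) := by
    intro a b hbK l hl l' hl'
    rw [mem_Ico] at hl hl'
    have hlip : ∀ {l l'}, l ≤ l' → l' < K → |G l' - G l| ≤ ε * (l' - l) :=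
      abs_sub_le_of_abs_succ_sub_le fun l hl => (hstepG l).symm ▸ hstep l hl
    have hab : ∀ {l l' : ℕ}, l ∈ Set.Ico a b → l' ∈ Set.Ico a b → ((l' : ℝ) - l) ≤ b - a := by
      intro l l' hl hl'; rw [Set.mem_Ico] at hl hl'
      have : (l' : ℝ) + 1 ≤ b := by exact_mod_cast hl'.2
      have : (a : ℝ) ≤ l := by exact_mod_cast hl.1
      linarith
    rcases le_total l l' with h | h
    · linarith [abs_le.1 (hlip h (by omega)), mul_le_mul_of_nonneg_left (hab hl hl') hε]
    · linarith [abs_le.1 (hlip h (by omega)), mul_le_mul_of_nonneg_left (hab hl' hl) hε]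
  have hδ : ∀ {a b : ℕ}, a ≤ b → 0 ≤ ε * ((b : ℝ) - a) := fun h =>
    mul_nonneg hε (sub_nonneg.2 (by exact_mod_cast h))
  rw [range_eq_Ico, ← Ico_union_Ico_eq_Ico (Nat.zero_le m) hmK, image_union]
  refine (HasFloorLinearPartition.union
    ((disjoint_image (progression_injective hq)).2 (Ico_disjoint_Ico_consecutive 0 m K))
    (hasFloorLinearPartition_image_Ico hn₀ hq hG (Or.inr hanti) (hδ (Nat.zero_le m))
      (hspread 0 m hmK))
    (hasFloorLinearPartition_image_Ico hn₀ hq hG (Or.inl hmono) (hδ hmK)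
      (hspread m K le_rfl))).mono (le_of_eq (by push_cast; ring))

end Progression

theorem filter_Ico_sub_mod_eq_image (A B : ℕ) {q r : ℕ} (hq : 1 ≤ q) (hr : r < q) :
    ∃ K, {n ∈ Ico A B | (n - A) % q = r} = (range K).image fun l => A + r + l * q := by
  have hK : ∀ l, l < (B - (A + r) + (q - 1)) / q ↔ A + r + l * q < B := fun l => by
    rw [Nat.lt_div_iff_mul_lt hq]; omega
  refine ⟨(B - (A + r) + (q - 1)) / q, ?_⟩
  ext n
  simp only [mem_filter, mem_Ico, mem_image, mem_range, hK]
  constructor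
  · rintro ⟨⟨hAn, hnB⟩, rfl⟩
    have := Nat.div_add_mod' (n - A) q
    exact ⟨(n - A) / q, by omega, by omega⟩
  · rintro ⟨l, hl, rfl⟩
    refine ⟨⟨by omega, hl⟩, ?_⟩
    rw [show A + r + l * q - A = r + l * q by omega, Nat.add_mul_mod_self_right,
      Nat.mod_eq_of_lt hr]

theorem abs_div_sq_sub_div_mul_le {x A H n n' : ℝ} (hx : 0 ≤ x) (hA : 0 < A) (hHA : H ≤ A)
    (hn : A ≤ n) (hnH : n ≤ A + H) (hn' : A ≤ n') (hnH' : n' ≤ A + H) :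
    |x / A ^ 2 - x / (n * n')| ≤ 3 * x * H / A ^ 3 := by
  have hAn : A ^ 2 ≤ n * n' := by nlinarith
  have hnn : n * n' - A ^ 2 ≤ 3 * A * H := by nlinarith
  rw [abs_of_nonneg (sub_nonneg.2 (div_le_div_of_nonneg_left hx (by positivity) hAn))]
  calc x / A ^ 2 - x / (n * n') = x * (n * n' - A ^ 2) / (A ^ 2 * (n * n')) := by
        have : n ≠ 0 := (hA.trans_le hn).ne'
        have : n' ≠ 0 := (hA.trans_le hn').ne'
        field_simp
    _ ≤ x * (3 * A * H) / (A ^ 2 * A ^ 2) := by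
        have : 0 ≤ H := by linarith
        gcongr
    _ = 3 * x * H / A ^ 3 := by field_simp

theorem hasFloorLinearPartition_Ico_of_le_add {x : ℝ} (hx : 0 ≤ x) {A B H Q : ℕ} (hA : 1 ≤ A)
    (hHA : H ≤ A) (hB : B ≤ A + H) (hQ : 1 ≤ Q) :
    HasFloorLinearPartition x (Ico A B) ((1 / (Q + 1) + 3 * x * Q * H / A ^ 3) * H + 4 * Q) := by
  obtain ⟨q, hq, hqQ, hdir⟩ := Real.exists_nat_abs_mul_sub_round_le (x / (A : ℝ) ^ 2) hQ
  set j := round (q * (x / (A : ℝ) ^ 2))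
  set ε : ℝ := 1 / (Q + 1) + 3 * x * Q * H / A ^ 3
  have hqQ' : (q : ℝ) ≤ Q := by exact_mod_cast hqQ
  have hstep : ∀ n : ℕ, A ≤ n → n + q < B → |j - x * q / (n * (n + q))| ≤ ε := by
    intro n hAn hnB
    have hAn' : (A : ℝ) ≤ n := by exact_mod_cast hAn
    have hnB' : (n : ℝ) + q ≤ A + H := by exact_mod_cast (show n + q ≤ A + H by omega)
    have hq0 : (0 : ℝ) ≤ q := Nat.cast_nonneg q
    have hclose := abs_div_sq_sub_div_mul_le hx (by positivity) (by exact_mod_cast hHA) hAn'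
      (by linarith) (by linarith) hnB'
    calc |j - x * q / (n * (n + q))|
        = |-(q * (x / A ^ 2) - j) + q * (x / A ^ 2 - x / (n * (n + q)))| := by ring_nf
      _ ≤ |q * (x / A ^ 2) - j| + q * |x / A ^ 2 - x / (n * (n + q))| := by
        refine (abs_add_le _ _).trans_eq ?_
        rw [abs_neg, abs_mul, Nat.abs_cast]
      _ ≤ 1 / (Q + 1) + Q * (3 * x * H / A ^ 3) := by gcongr
      _ = ε := by ring
  have hpiece : ∀ r ∈ (Ico A B).image (fun n => (n - A) % q), HasFloorLinearPartition x
      {n ∈ Ico A B | (n - A) % q = r} (ε * #{n ∈ Ico A B | (n - A) % q = r} + 4) := by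
    intro r hr
    obtain ⟨n, -, rfl⟩ := mem_image.1 hr
    obtain ⟨K, hK⟩ := filter_Ico_sub_mod_eq_image A B hq (Nat.mod_lt (n - A) hq)
    rw [hK, card_image_of_injective _ (progression_injective hq), card_range]
    refine hasFloorLinearPartition_progression hx (by omega) hq K j (by positivity) fun l hl => ?_
    have hmem : A + (n - A) % q + (l + 1) * q ∈ (range K).image fun l => A + (n - A) % q + l * q :=
      mem_image_of_mem _ (mem_range.2 hl)
    rw [← hK, mem_filter, mem_Ico, Nat.add_mul, one_mul] at hmem
    exact hstep (A + (n - A) % q + l * q) (by omega) (by omega)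
  refine (HasFloorLinearPartition.fiberwise _ hpiece).mono ?_
  have hcard : #((Ico A B).image fun n => (n - A) % q) ≤ q :=
    (card_le_card fun r hr => by
      obtain ⟨n, -, rfl⟩ := mem_image.1 hr; exact mem_range.2 (Nat.mod_lt _ hq)).trans_eq
      (card_range q)
  have hsum := congrArg (Nat.cast (R := ℝ))
    (card_eq_sum_card_image (fun n => (n - A) % q) (Ico A B))
  rw [sum_add_distrib, ← mul_sum, sum_const, nsmul_eq_mul, ← Nat.cast_sum, ← hsum, Nat.card_Ico]
  have : ((B - A : ℕ) : ℝ) ≤ H := by exact_mod_cast (show B - A ≤ H by omega)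
  have : (#((Ico A B).image fun n => (n - A) % q) : ℝ) ≤ Q := by exact_mod_cast hcard.trans hqQ
  have : 0 ≤ ε := by positivity
  nlinarith

theorem filter_Ico_div_eq (a b : ℕ) {H : ℕ} (hH : 1 ≤ H) (c : ℕ) :
    {n ∈ Ico a b | n / H = c} = Ico (max a (c * H)) (min b (c * H + H)) := by
  ext n
  simp only [mem_filter, mem_Ico, Nat.div_eq_iff hH, max_le_iff, lt_min_iff]
  omega

theorem hasFloorLinearPartition_Ico_of_le_left {x : ℝ} (hx : 0 ≤ x) {T H Q : ℕ} (hH : 1 ≤ H)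
    (hHT : H ≤ T) (hQ : 1 ≤ Q) (N : ℕ) :
    HasFloorLinearPartition x (Ico (T + 1) (N + 1))
      ((N / H + 1 : ℕ) * ((1 / (Q + 1) + 3 * x * Q * H / T ^ 3) * H + 4 * Q)) := by
  have hT : (0 : ℝ) < T := by exact_mod_cast (show 0 < T by omega)
  refine (HasFloorLinearPartition.fiberwise (fun n => n / H)
    (k := fun _ => (1 / (Q + 1) + 3 * x * Q * H / T ^ 3) * H + 4 * Q) fun c _ => ?_).mono ?_
  · rw [filter_Ico_div_eq _ _ hH]
    refine (hasFloorLinearPartition_Ico_of_le_add hx (H := H) (by omega) (by omega) (by omega)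
      hQ).mono ?_
    have : (T : ℝ) ≤ (max (T + 1) (c * H) : ℕ) := by exact_mod_cast (by omega)
    gcongr
  · rw [sum_const, nsmul_eq_mul]
    gcongr
    refine (card_le_card fun c hc => ?_).trans_eq (card_range _)
    obtain ⟨n, hn, rfl⟩ := mem_image.1 hc
    exact mem_range.2 (Nat.lt_succ_of_le (Nat.div_le_div_right (by simp at hn; omega)))

theorem hasFloorLinearPartition_Icc_one {x : ℝ} (hx : 0 ≤ x) {T H Q : ℕ} (hH : 1 ≤ H)
    (hHT : H ≤ T) (hQ : 1 ≤ Q) (N : ℕ) :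
    HasFloorLinearPartition x (Icc 1 N)
      (T + (N / H + 1 : ℕ) * ((1 / (Q + 1) + 3 * x * Q * H / T ^ 3) * H + 4 * Q)) := by
  have hsplit : Icc 1 N = Icc 1 (min T N) ∪ Ico (T + 1) (N + 1) := by
    ext n; simp only [mem_union, mem_Icc, mem_Ico]; omega
  rw [hsplit]
  refine HasFloorLinearPartition.union (disjoint_left.2 fun n hn hn' => ?_)
    ((HasFloorLinearPartition.of_forall_one_le fun n hn => (mem_Icc.1 hn).1).mono ?_)
    (hasFloorLinearPartition_Ico_of_le_left hx hH hHT hQ N)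
  · simp only [mem_Icc, mem_Ico] at hn hn'; omega
  · simp

theorem partition_count_le {x y : ℝ} (hx : 0 ≤ x) (hxy : x ≤ y ^ 100) (hy : 1 ≤ y) {T H Q N : ℕ}
    (hT : y ^ 49 / 2 < T) (hT' : T ≤ y ^ 49) (hH : y ^ 10 / 2 < H) (hH' : H ≤ y ^ 10)
    (hQ : y ^ 2 < Q + 1) (hQ' : Q ≤ y ^ 2) (hN : N ≤ y ^ 50) :
    T + (N / H + 1 : ℕ) * ((1 / (Q + 1) + 3 * x * Q * H / T ^ 3) * H + 4 * Q) ≤ 88 * y ^ 49 := by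
  have hmono : ∀ {a b : ℕ}, a ≤ b → y ^ a ≤ y ^ b := pow_le_pow_right₀ hy
  have hy0 : 0 < y := by linarith
  have hH0 : (0 : ℝ) < H := by linarith [pow_pos hy0 10]
  have hT0 : (0 : ℝ) < T := by linarith [pow_pos hy0 49]
  have hblocks : ((N / H + 1 : ℕ) : ℝ) ≤ 3 * y ^ 40 := by
    have hdiv : (N : ℝ) / H ≤ 2 * y ^ 40 := by
      rw [div_le_iff₀ hH0]
      nlinarith [pow_pos hy0 40]
    push_cast
    linarith [(Nat.cast_div_le : ((N / H : ℕ) : ℝ) ≤ N / H), hmono (Nat.zero_le 40), pow_zero y]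
  have hfirst : 1 / (Q + 1) * H ≤ y ^ 8 := by
    rw [div_mul_eq_mul_div, one_mul, div_le_iff₀ (by positivity)]
    nlinarith [pow_pos hy0 8]
  have hsecond : 3 * x * Q * H / T ^ 3 * H ≤ 24 := by
    rw [div_mul_eq_mul_div, div_le_iff₀ (by positivity)]
    have hT3 : y ^ 147 < 8 * (T : ℝ) ^ 3 := by
      have := pow_lt_pow_left₀ hT (by positivity) (three_ne_zero)
      rw [div_pow, ← pow_mul] at this
      linarith
    have hQH : (Q : ℝ) * H * H ≤ y ^ 22 := by
      calc (Q : ℝ) * H * H ≤ y ^ 2 * y ^ 10 * y ^ 10 := by gcongr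
        _ = y ^ 22 := by ring
    calc 3 * x * Q * H * H = 3 * x * (Q * H * H) := by ring
      _ ≤ 3 * y ^ 100 * y ^ 22 := by gcongr
      _ = 3 * y ^ 122 := by ring
      _ ≤ 3 * y ^ 147 := by linarith [hmono (show 122 ≤ 147 by norm_num)]
      _ ≤ 24 * T ^ 3 := by linarith
  have hblock : (1 / (Q + 1) + 3 * x * Q * H / T ^ 3) * H + 4 * Q ≤ 29 * y ^ 8 := by
    rw [add_mul]
    linarith [one_le_pow₀ (n := 8) hy, hmono (show 2 ≤ 8 by norm_num)]
  calc (T : ℝ) + (N / H + 1 : ℕ) * ((1 / (Q + 1) + 3 * x * Q * H / T ^ 3) * H + 4 * Q)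
      ≤ y ^ 49 + 3 * y ^ 40 * (29 * y ^ 8) := by gcongr
    _ = y ^ 49 + 87 * y ^ 48 := by ring
    _ ≤ 88 * y ^ 49 := by linarith [hmono (show 48 ≤ 49 by norm_num)]

/-- Complexity of the hyperbola: there is an absolute constant `C > 0` such that for every
real `x ≥ 2`, the set `{n ∈ ℕ : 1 ≤ n ≤ √x}` can be partitioned into at most `C x^{0.49}`
arithmetic progressions, on each of which `n ↦ ⌊x/n⌋` agrees with a linear function with
rational coefficients. -/
theorem hyperbola_partition :
    ∃ C : ℝ, 0 < C ∧ ∀ x : ℝ, 2 ≤ x →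
      ∃ Ps : Finset (Finset ℕ),
        (∀ P ∈ Ps, ∃ n₀ q L : ℕ, 1 ≤ n₀ ∧ 1 ≤ q ∧
          P = (Finset.range (L + 1)).image (fun l => n₀ + l * q)) ∧
        (∀ P ∈ Ps, ∀ P' ∈ Ps, P ≠ P' → Disjoint P P') ∧
        Ps.biUnion id = Finset.Icc 1 ⌊Real.sqrt x⌋₊ ∧
        (Ps.card : ℝ) ≤ C * x ^ (0.49 : ℝ) ∧
        (∀ P ∈ Ps, ∃ u v : ℚ, ∀ n ∈ P, (⌊x / (n : ℝ)⌋ : ℚ) = u * (n : ℚ) + v) := by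
  refine ⟨88, by norm_num, fun x hx => ?_⟩
  have hx0 : 0 ≤ x := by linarith
  set y := x ^ (1 / 100 : ℝ)
  have hy : 1 ≤ y := Real.one_le_rpow (by linarith) (by norm_num)
  have hpow : ∀ k : ℕ, x ^ ((k : ℝ) / 100) = y ^ k := fun k => by
    rw [← Real.rpow_natCast, ← Real.rpow_mul hx0]; ring_nf
  have hfloor_pos : ∀ k : ℕ, 1 ≤ ⌊y ^ k⌋₊ := fun k => Nat.le_floor (by simpa using one_le_pow₀ hy)
  have hH : ⌊y ^ 10⌋₊ ≤ ⌊y ^ 49⌋₊ := Nat.floor_le_floor (pow_le_pow_right₀ hy (by norm_num))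
  obtain ⟨F, hF, hcard⟩ := (hasFloorLinearPartition_Icc_one hx0 (hfloor_pos 10) hH (hfloor_pos 2)
    ⌊√x⌋₊).mono (partition_count_le hx0 (by rw [← hpow]; norm_num) hy
      (Nat.div_two_lt_floor (one_le_pow₀ hy)) (Nat.floor_le (by positivity))
      (Nat.div_two_lt_floor (one_le_pow₀ hy)) (Nat.floor_le (by positivity))
      (Nat.lt_floor_add_one _) (Nat.floor_le (by positivity))
      ((Nat.floor_le (Real.sqrt_nonneg x)).trans (by rw [Real.sqrt_eq_rpow, ← hpow]; norm_num)))
  refine ⟨F.parts, fun P hP => (hF P hP).1, fun P hP P' hP' => F.disjoint hP hP',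
    F.biUnion_parts, ?_, fun P hP => (hF P hP).2⟩
  rwa [show x ^ (0.49 : ℝ) = y ^ 49 by rw [← hpow]; norm_num]
end

section
/- There exist absolute constants c₀ > 0, C > 0 and x₀ > 0 such that for every real c with 0 < c < c₀, every real x ≥ x₀, and every real x' with 0 < x − x' ≤ x^{1/2+c}, the set {n ∈ ℕ : x^{1/2−c} ≤ n ≤ √x} can be partitioned into at most C·x^{1/2−c₀} arithmetic progressions, such that for each progression P in the partition: (i) there exist rational numbers u, v with ⌊x/n⌋ = u·n + v for all n ∈ P, and (ii) the function n ↦ ⌊x/n⌋ − ⌊x'/n⌋ is constant on P. -/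
/-!
Put `y = x^{1/24}`, so that `x^{1/2-c} ≤ n ≤ √x` forces `y^11 ≤ n ≤ y^12`, and `x - x' ≤ y^13`.
Cut the range greedily into blocks: at the start `N` of a block, Dirichlet's theorem gives
`|x/N² - a/q| ≤ 1/(qM²)` with `q ≤ M²`, `M = ⌈y⌉`, and the block is `[N, N + qM)`. On a residue
class `n ≡ n₀ (mod q)` of the block a second-order expansion gives
`x/n + (a/q)(n - n₀) = x/n₀ + O(1/M + y⁻³)`, and the same for `x'` up to `O(y⁻⁶)`, so the integer
`⌊x/n⌋ + a(n - n₀)/q` takes at most two values. As `t ↦ x/t + (a/q)t` is convex, the smaller value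
is taken on an interval, so the class splits into at most 16 progressions on which both
`⌊x/n⌋ + a(n - n₀)/q` and `⌊x'/n⌋ + a(n - n₀)/q` are constant: there `⌊x/n⌋` is affine in `n` and
`⌊x/n⌋ - ⌊x'/n⌋` is constant. A block of length `qM` costs `16q` pieces, that is `16/M` per
integer, so the total is `O(y^12/M + M³) = O(y^11) = O(x^{1/2-1/24})`.
-/

open Finset

def IsResidueInterval (q : ℕ) (R : Finset ℕ) : Prop :=
  ∀ n₁ ∈ R, ∀ n₂ ∈ R, n₁ ≡ n₂ [MOD q] ∧ ∀ n, n₁ ≤ n → n ≤ n₂ → n ≡ n₁ [MOD q] → n ∈ R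

lemma IsResidueInterval.eq_image {q : ℕ} (hq : 0 < q) {R : Finset ℕ} (hR : IsResidueInterval q R)
    (hne : R.Nonempty) :
    R = (range ((R.max' hne - R.min' hne) / q + 1)).image fun l => R.min' hne + l * q := by
  set n₀ := R.min' hne
  have hn₀ : n₀ ∈ R := R.min'_mem hne
  have hmax : n₀ ≤ R.max' hne := R.min'_le _ (R.max'_mem hne)
  ext n
  simp only [mem_image, mem_range, Nat.lt_succ_iff, Nat.le_div_iff_mul_le hq]
  constructor
  · intro hn
    have hle : n₀ ≤ n := R.min'_le n hn
    obtain ⟨l, hl⟩ := (Nat.modEq_iff_dvd' hle).mp (hR n₀ hn₀ n hn).1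
    have := R.le_max' n hn
    exact ⟨l, by rw [mul_comm]; omega, by rw [mul_comm]; omega⟩
  · rintro ⟨l, hl, rfl⟩
    exact (hR n₀ hn₀ _ (R.max'_mem hne)).2 _ (Nat.le_add_right _ _) (by omega)
      (Nat.add_mul_mod_self_right n₀ l q)

lemma IsResidueInterval.filter_eq_of_monotone {q : ℕ} {R : Finset ℕ} (hR : IsResidueInterval q R)
    {β : Type*} [PartialOrder β] {f : ℕ → β} (hf : Monotone f) (b : β)
    [DecidablePred (f · = b)] : IsResidueInterval q (R.filter (f · = b)) := by
  intro n₁ h₁ n₂ h₂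
  rw [mem_filter] at h₁ h₂
  refine ⟨(hR n₁ h₁.1 n₂ h₂.1).1, fun n hn₁ hn₂ hmod => mem_filter.mpr
    ⟨(hR n₁ h₁.1 n₂ h₂.1).2 n hn₁ hn₂ hmod, ?_⟩⟩
  exact le_antisymm (h₂.2 ▸ hf hn₂) (h₁.2 ▸ hf hn₁)

structure IsGoodProgression (x x' : ℝ) (P : Finset ℕ) : Prop where
  isAP : ∃ n₀ q L : ℕ, 1 ≤ n₀ ∧ 1 ≤ q ∧ P = (range (L + 1)).image fun l => n₀ + l * q
  floor_affine : ∃ u v : ℚ, ∀ n ∈ P, (⌊x / n⌋ : ℚ) = u * n + v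
  floor_sub_const : ∃ K : ℤ, ∀ n ∈ P, ⌊x / n⌋ - ⌊x' / n⌋ = K

structure IsGoodPartition (x x' : ℝ) (S : Finset ℕ) (Ps : Finset (Finset ℕ)) : Prop where
  good : ∀ P ∈ Ps, IsGoodProgression x x' P
  pairwiseDisjoint : (Ps : Set (Finset ℕ)).PairwiseDisjoint id
  biUnion_eq : Ps.biUnion id = S

namespace IsGoodPartition

variable {x x' : ℝ}

lemma singleton {P : Finset ℕ} (hP : IsGoodProgression x x' P) : IsGoodPartition x x' P {P} :=
  ⟨by simpa using hP, by simp, by simp⟩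

lemma subset {S : Finset ℕ} {Ps : Finset (Finset ℕ)} (h : IsGoodPartition x x' S Ps) {P : Finset ℕ}
    (hP : P ∈ Ps) : P ⊆ S :=
  h.biUnion_eq ▸ subset_biUnion_of_mem id hP

lemma union {S₁ S₂ : Finset ℕ} {Ps₁ Ps₂ : Finset (Finset ℕ)} (h₁ : IsGoodPartition x x' S₁ Ps₁)
    (h₂ : IsGoodPartition x x' S₂ Ps₂) (hS : Disjoint S₁ S₂) :
    IsGoodPartition x x' (S₁ ∪ S₂) (Ps₁ ∪ Ps₂) := by
  refine ⟨fun P hP => (mem_union.mp hP).elim (h₁.good P) (h₂.good P), ?_, ?_⟩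
  · rw [coe_union, Set.pairwiseDisjoint_union]
    exact ⟨h₁.pairwiseDisjoint, h₂.pairwiseDisjoint, fun P hP P' hP' _ =>
      hS.mono (h₁.subset hP) (h₂.subset hP')⟩
  · rw [union_biUnion, h₁.biUnion_eq, h₂.biUnion_eq]

lemma exists_of_fibers {β : Type*} [DecidableEq β] (S : Finset ℕ) (φ : ℕ → β) (c : ℕ)
    (h : ∀ b ∈ S.image φ, ∃ Ps, IsGoodPartition x x' (S.filter (φ · = b)) Ps ∧ Ps.card ≤ c) :
    ∃ Ps, IsGoodPartition x x' S Ps ∧ Ps.card ≤ c * (S.image φ).card := by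
  choose! F hF using h
  refine ⟨(S.image φ).biUnion F, ⟨?_, ?_, ?_⟩, ?_⟩
  · intro P hP
    obtain ⟨b, hb, hP⟩ := mem_biUnion.mp hP
    exact (hF b hb).1.good P hP
  · intro P hP P' hP' hne
    obtain ⟨b, hb, hP⟩ := mem_biUnion.mp hP
    obtain ⟨b', hb', hP'⟩ := mem_biUnion.mp hP'
    obtain rfl | hbb' := eq_or_ne b b'
    · exact (hF b hb).1.pairwiseDisjoint hP hP' hne
    · exact (disjoint_filter.mpr fun _ _ h h' => hbb' (h.symm.trans h')).mono
        ((hF b hb).1.subset hP) ((hF b' hb').1.subset hP')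
  · rw [biUnion_biUnion]
    conv_rhs => rw [← image_biUnion_filter_eq S φ]
    exact biUnion_congr rfl fun b hb => (hF b hb).1.biUnion_eq
  · calc ((S.image φ).biUnion F).card ≤ ∑ b ∈ S.image φ, (F b).card := card_biUnion_le
      _ ≤ ∑ _b ∈ S.image φ, c := sum_le_sum fun b hb => (hF b hb).2
      _ = c * (S.image φ).card := by rw [sum_const, smul_eq_mul, mul_comm]

end IsGoodPartition

lemma floor_eq_ite_of_abs_sub_le {t c : ℝ} (h : |t - c| ≤ 1 / 4) :
    ⌊t⌋ = if t < ⌊c + 1 / 4⌋ then ⌊c + 1 / 4⌋ - 1 else ⌊c + 1 / 4⌋ := by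
  have h₁ := Int.floor_le (c + 1 / 4)
  have h₂ := Int.lt_floor_add_one (c + 1 / 4)
  obtain ⟨h₃, h₄⟩ := abs_le.mp h
  split_ifs with ht <;> rw [Int.floor_eq_iff] <;> push_cast <;> constructor <;> linarith

lemma floor_div_add_mul_add_of_eq_intCast {z : ℝ} {n : ℕ} {α β : ℚ} {k : ℤ} (hk : α * n + β = k) :
    ⌊z / n + α * n + β⌋ = ⌊z / n⌋ + k := by
  rw [add_assoc, ← Int.floor_add_intCast]
  exact_mod_cast congrArg (fun r : ℚ => ⌊z / n + (r : ℝ)⌋) hk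

lemma isGoodProgression_of_floor_eq {x x' : ℝ} {q : ℕ} (hq : 0 < q) {P : Finset ℕ}
    (hP : IsResidueInterval q P) (hne : P.Nonempty) (hpos : ∀ n ∈ P, 0 < n) {α β : ℚ}
    (hint : ∀ n ∈ P, ∃ k : ℤ, α * n + β = k) {m m' : ℤ}
    (hm : ∀ n ∈ P, ⌊x / n + α * n + β⌋ = m) (hm' : ∀ n ∈ P, ⌊x' / n + α * n + β⌋ = m') :
    IsGoodProgression x x' P := by
  refine ⟨⟨_, q, _, hpos _ (P.min'_mem hne), hq, hP.eq_image hq hne⟩, ⟨-α, m - β, fun n hn => ?_⟩,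
    ⟨m - m', fun n hn => ?_⟩⟩
  all_goals
    obtain ⟨k, hk⟩ := hint n hn
    have h := hm n hn
    have h' := hm' n hn
    rw [floor_div_add_mul_add_of_eq_intCast hk] at h h'
  · rw [show ⌊x / n⌋ = m - k by omega]
    push_cast
    linarith
  · omega

lemma convexOn_div_add_mul_add {z : ℝ} (hz : 0 ≤ z) (a b : ℝ) :
    ConvexOn ℝ (Set.Ioi 0) fun t : ℝ => z / t + a * t + b := by
  refine ((((convexOn_zpow (-1)).smul hz).add
    ((LinearMap.mul ℝ ℝ a).convexOn (convex_Ioi 0))).add_const b).congr fun t _ => ?_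
  simp [div_eq_mul_inv]

lemma ordConnected_setOf_div_add_mul_add_lt {z : ℝ} (hz : 0 ≤ z) (a b m : ℝ) :
    {n : ℕ | 0 < n ∧ z / n + a * n + b < m}.OrdConnected := by
  refine ⟨fun n₁ h₁ n₂ h₂ n hn => ⟨h₁.1.trans_le hn.1, ?_⟩⟩
  have hseg : (n : ℝ) ∈ segment ℝ (n₁ : ℝ) n₂ := by
    rw [segment_eq_Icc (by exact_mod_cast hn.1.trans hn.2)]
    exact ⟨by exact_mod_cast hn.1, by exact_mod_cast hn.2⟩
  have hpos (k : ℕ) (hk : 0 < k) : (k : ℝ) ∈ Set.Ioi 0 := Set.mem_Ioi.mpr (Nat.cast_pos.mpr hk)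
  exact ((convexOn_div_add_mul_add hz a b).le_on_segment (hpos _ h₁.1) (hpos _ h₂.1)
    hseg).trans_lt (max_lt h₁.2 h₂.2)

lemma monotone_mem_upperClosure_toDual_mem_lowerClosure {α : Type*} [Preorder α] (s : Set α) :
    Monotone fun a => (a ∈ upperClosure s, OrderDual.toDual (a ∈ lowerClosure s)) :=
  Monotone.prodMk (fun _ _ h => (upperClosure s).upper h) fun _ _ h => (lowerClosure s).lower h

lemma exists_isGoodPartition_of_abs_sub_le {x x' : ℝ} (hx : 0 ≤ x) (hx' : 0 ≤ x') {q : ℕ}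
    (hq : 0 < q) {R : Finset ℕ} (hR : IsResidueInterval q R) (hpos : ∀ n ∈ R, 0 < n) {α β : ℚ}
    (hint : ∀ n ∈ R, ∃ k : ℤ, α * n + β = k) {c c' : ℝ}
    (hc : ∀ n ∈ R, |x / n + α * n + β - c| ≤ 1 / 4)
    (hc' : ∀ n ∈ R, |x' / n + α * n + β - c'| ≤ 1 / 4) :
    ∃ Ps, IsGoodPartition x x' R Ps ∧ Ps.card ≤ 16 := by
  classical
  set m := ⌊c + 1 / 4⌋
  set m' := ⌊c' + 1 / 4⌋
  set L := {n : ℕ | 0 < n ∧ x / n + α * n + β < m}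
  set L' := {n : ℕ | 0 < n ∧ x' / n + α * n + β < m'}
  -- `L` is an interval by convexity, so `n ∈ L` is read off the monotone label `φ n`,
  -- whose fibres in `R` are again residue intervals.
  have hL : ∀ n, n ∈ L ↔ n ∈ upperClosure L ∧ n ∈ lowerClosure L := fun n => (Set.ext_iff.mp
    (ordConnected_setOf_div_add_mul_add_lt hx α β m).upperClosure_inter_lowerClosure n).symm
  have hL' : ∀ n, n ∈ L' ↔ n ∈ upperClosure L' ∧ n ∈ lowerClosure L' := fun n => (Set.ext_iff.mp
    (ordConnected_setOf_div_add_mul_add_lt hx' α β m').upperClosure_inter_lowerClosure n).symm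
  set φ := fun n => ((n ∈ upperClosure L, OrderDual.toDual (n ∈ lowerClosure L)),
    (n ∈ upperClosure L', OrderDual.toDual (n ∈ lowerClosure L')))
  have hφ : Monotone φ := (monotone_mem_upperClosure_toDual_mem_lowerClosure L).prodMk
    (monotone_mem_upperClosure_toDual_mem_lowerClosure L')
  have hfloor : ∀ n ∈ R, ⌊x / n + α * n + β⌋ = if n ∈ L then m - 1 else m := fun n hn => by
    simp only [floor_eq_ite_of_abs_sub_le (hc n hn), L, Set.mem_ofPred_eq, hpos n hn, true_and]
    rfl
  have hfloor' : ∀ n ∈ R, ⌊x' / n + α * n + β⌋ = if n ∈ L' then m' - 1 else m' := fun n hn => by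
    simp only [floor_eq_ite_of_abs_sub_le (hc' n hn), L', Set.mem_ofPred_eq, hpos n hn, true_and]
    rfl
  obtain ⟨Ps, hPs, hcard⟩ :=
    IsGoodPartition.exists_of_fibers (x := x) (x' := x') R φ 1 fun b hb => by
    obtain ⟨n₀, hn₀, rfl⟩ := mem_image.mp hb
    refine ⟨_, .singleton (isGoodProgression_of_floor_eq hq (hR.filter_eq_of_monotone hφ _)
      ⟨n₀, mem_filter.mpr ⟨hn₀, rfl⟩⟩ (fun n hn => hpos n (mem_filter.mp hn).1)
      (fun n hn => hint n (mem_filter.mp hn).1) (m := if n₀ ∈ L then m - 1 else m)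
      (m' := if n₀ ∈ L' then m' - 1 else m') ?_ ?_), (card_singleton _).le⟩
    all_goals
      intro n hn
      obtain ⟨hnR, hφn⟩ := mem_filter.mp hn
      simp only [φ, Prod.mk.injEq, OrderDual.toDual_inj] at hφn
      simp only [hfloor n hnR, hfloor' n hnR, hL n, hL' n, hL n₀, hL' n₀, hφn]
  exact ⟨Ps, hPs, hcard.trans (by simpa using card_le_univ (R.image φ))⟩

lemma abs_div_add_mul_sub_div_le {z α N n₀ n D : ℝ} (hz : 0 ≤ z) (hN : 0 < N) (h₀ : N ≤ n₀)
    (h₁ : n₀ ≤ n) (h₂ : n ≤ N + D) (hD : D ≤ N) :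
    |z / n + α * (n - n₀) - z / n₀| ≤ |z / N ^ 2 - α| * D + 3 * z * D ^ 2 / N ^ 3 := by
  have hn₀ : 0 < n₀ := hN.trans_le h₀
  have hn : 0 < n := hn₀.trans_le h₁
  have hd : 0 ≤ n - n₀ := by linarith
  have hD₀ : 0 ≤ D := by linarith
  have hsq : N ^ 2 ≤ n * n₀ := by nlinarith
  have hsqD : n * n₀ - N ^ 2 ≤ 3 * N * D := by nlinarith
  have hsplit : z / n + α * (n - n₀) - z / n₀ =
      (α - z / N ^ 2) * (n - n₀) + z * (n - n₀) * (n * n₀ - N ^ 2) / (N ^ 2 * (n * n₀)) := by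
    field_simp
    ring
  have hcurv : |z * (n - n₀) * (n * n₀ - N ^ 2) / (N ^ 2 * (n * n₀))| ≤ 3 * z * D ^ 2 / N ^ 3 := by
    rw [abs_of_nonneg (by have := sub_nonneg.mpr hsq; positivity)]
    calc z * (n - n₀) * (n * n₀ - N ^ 2) / (N ^ 2 * (n * n₀))
        ≤ z * D * (3 * N * D) / (N ^ 2 * N ^ 2) := by gcongr; linarith
      _ = 3 * z * D ^ 2 / N ^ 3 := by field_simp
  rw [hsplit]
  refine (abs_add_le _ _).trans (add_le_add ?_ hcurv)
  rw [abs_mul, abs_sub_comm, abs_of_nonneg hd]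
  exact mul_le_mul_of_nonneg_left (by linarith) (abs_nonneg _)

lemma abs_div_sub_div_le {w N n₀ n D : ℝ} (hw : 0 ≤ w) (hN : 0 < N) (h₀ : N ≤ n₀) (h₁ : n₀ ≤ n)
    (h₂ : n - n₀ ≤ D) : |w / n - w / n₀| ≤ w * D / N ^ 2 := by
  have hn₀ : 0 < n₀ := hN.trans_le h₀
  have hn : 0 < n := hn₀.trans_le h₁
  have hD₀ : 0 ≤ D := by linarith
  rw [abs_sub_comm, div_sub_div _ _ hn₀.ne' hn.ne',
    abs_of_nonneg (div_nonneg (by nlinarith) (by positivity))]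
  calc (w * n - n₀ * w) / (n₀ * n) = w * (n - n₀) / (n₀ * n) := by ring
    _ ≤ w * D / (N * N) := by gcongr; linarith
    _ = w * D / N ^ 2 := by ring

lemma isResidueInterval_filter_mod_eq (q a b r : ℕ) :
    IsResidueInterval q ((Ico a b).filter (· % q = r)) := by
  intro n₁ h₁ n₂ h₂
  simp only [mem_filter, mem_Ico] at h₁ h₂ ⊢
  exact ⟨h₁.2.trans h₂.2.symm, fun n hn₁ hn₂ hmod => ⟨⟨by omega, by omega⟩, Eq.trans hmod h₁.2⟩⟩

lemma exists_isGoodPartition_Ico_of_abs_sub_le {x x' : ℝ} (hx : 0 ≤ x) (hx' : 0 ≤ x') {N h : ℕ}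
    (hN : 0 < N) (ρ : ℚ)
    (hosc : ∀ n₀ n : ℕ, N ≤ n₀ → n₀ ≤ n → n < N + h → |x / n + ρ * (n - n₀) - x / n₀| ≤ 1 / 4)
    (hosc' : ∀ n₀ n : ℕ, N ≤ n₀ → n₀ ≤ n → n < N + h → |x' / n + ρ * (n - n₀) - x' / n₀| ≤ 1 / 4) :
    ∃ Ps, IsGoodPartition x x' (Ico N (N + h)) Ps ∧ Ps.card ≤ 16 * ρ.den := by
  obtain ⟨Ps, hPs, hcard⟩ := IsGoodPartition.exists_of_fibers (x := x) (x' := x')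
    (Ico N (N + h)) (· % ρ.den) 16 fun r hr => by
    set R := (Ico N (N + h)).filter (· % ρ.den = r)
    have hR := isResidueInterval_filter_mod_eq ρ.den N (N + h) r
    obtain ⟨n, hn, rfl⟩ := mem_image.mp hr
    have hne : R.Nonempty := ⟨n, mem_filter.mpr ⟨hn, rfl⟩⟩
    set n₀ := R.min' hne
    have hn₀ := (mem_Ico.mp (mem_filter.mp (R.min'_mem hne)).1).1
    have hmem : ∀ m ∈ R, n₀ ≤ m ∧ m < N + h := fun m hm =>
      ⟨R.min'_le m hm, (mem_Ico.mp (mem_filter.mp hm).1).2⟩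
    refine exists_isGoodPartition_of_abs_sub_le hx hx' ρ.den_pos hR
      (fun m hm => hN.trans_le (hn₀.trans (hmem m hm).1)) (α := ρ) (β := -ρ * n₀) ?_
      (c := x / n₀) (c' := x' / n₀) ?_ ?_
    · intro m hm
      obtain ⟨t, ht⟩ := (Nat.modEq_iff_dvd' (hmem m hm).1).mp ((hR _ (R.min'_mem hne) m hm).1)
      have hm' : (m : ℚ) = n₀ + ρ.den * t := by
        have := (hmem m hm).1
        exact_mod_cast (by omega : m = n₀ + ρ.den * t)
      refine ⟨ρ.num * t, ?_⟩
      rw [hm']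
      push_cast
      rw [← Rat.mul_den_eq_num]
      ring
    · intro m hm
      convert hosc n₀ m hn₀ (hmem m hm).1 (hmem m hm).2 using 3
      push_cast
      ring
    · intro m hm
      convert hosc' n₀ m hn₀ (hmem m hm).1 (hmem m hm).2 using 3
      push_cast
      ring
  refine ⟨Ps, hPs, hcard.trans (Nat.mul_le_mul_left 16 ?_)⟩
  calc ((Ico N (N + h)).image (· % ρ.den)).card ≤ (range ρ.den).card :=
        card_le_card fun r hr => by
          obtain ⟨n, -, rfl⟩ := mem_image.mp hr
          exact mem_range.mpr (Nat.mod_lt n ρ.den_pos)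
    _ = ρ.den := card_range _

lemma exists_isGoodPartition_Ico_of_blocks {x x' : ℝ} {A M K : ℕ} (hM : 0 < M)
    (hblock : ∀ N, A ≤ N → ∃ q, 0 < q ∧ q ≤ M ^ 2 ∧
      ∀ h ≤ q * M, ∃ Ps, IsGoodPartition x x' (Ico N (N + h)) Ps ∧ Ps.card ≤ K * q)
    (B N : ℕ) (hN : A ≤ N) :
    ∃ Ps, IsGoodPartition x x' (Ico N B) Ps ∧ Ps.card * M ≤ K * (B - N) + K * M ^ 3 := by
  induction hd : B - N using Nat.strong_induction_on generalizing N with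
  | _ d ih =>
  subst hd
  obtain ⟨q, hq, hqM, hblk⟩ := hblock N hN
  have hqM3 : q * M ≤ M ^ 3 := by nlinarith
  by_cases hlong : N + q * M ≤ B
  · obtain ⟨Ps₁, h₁, hc₁⟩ := hblk (q * M) le_rfl
    obtain ⟨Ps₂, h₂, hc₂⟩ := ih (B - (N + q * M)) (by have := Nat.mul_pos hq hM; omega)
      (N + q * M) (by omega) rfl
    refine ⟨Ps₁ ∪ Ps₂, ?_, ?_⟩
    · rw [← Ico_union_Ico_eq_Ico (Nat.le_add_right N (q * M)) hlong]
      exact h₁.union h₂ (Ico_disjoint_Ico_consecutive _ _ _)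
    · have hBN : B - N = q * M + (B - (N + q * M)) := by omega
      calc (Ps₁ ∪ Ps₂).card * M ≤ (Ps₁.card + Ps₂.card) * M :=
            Nat.mul_le_mul_right _ (card_union_le _ _)
        _ ≤ K * q * M + (K * (B - (N + q * M)) + K * M ^ 3) := by
            rw [add_mul]; exact add_le_add (Nat.mul_le_mul_right _ hc₁) hc₂
        _ = K * (B - N) + K * M ^ 3 := by rw [hBN]; ring
  · obtain ⟨Ps, hPs, hc⟩ := hblk (B - N) (by omega)
    have hIco : Ico N (N + (B - N)) = Ico N B := by
      ext n; simp only [mem_Ico]; omega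
    refine ⟨Ps, hIco ▸ hPs, ?_⟩
    calc Ps.card * M ≤ K * (q * M) := by rw [← mul_assoc]; exact Nat.mul_le_mul_right _ hc
      _ ≤ K * (B - N) + K * M ^ 3 := by nlinarith

lemma exists_isGoodPartition_block {x x' y : ℝ} {M : ℕ} (hy : 16 ≤ y) (hx : x = y ^ 24)
    (hx' : 0 < x - x') (hxx' : x - x' ≤ y ^ 13) (hyM : y ≤ M) (hMy : M ≤ 2 * y) (N : ℕ)
    (hN : y ^ 11 ≤ N) :
    ∃ q, 0 < q ∧ q ≤ M ^ 2 ∧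
      ∀ h ≤ q * M, ∃ Ps, IsGoodPartition x x' (Ico N (N + h)) Ps ∧ Ps.card ≤ 16 * q := by
  have hy₀ : 0 < y := by linarith
  have hy₃ : 4096 ≤ y ^ 3 := by nlinarith [pow_le_pow_left₀ (by norm_num) hy 3]
  have hN₀ : (0 : ℝ) < N := lt_of_lt_of_le (by positivity) hN
  have hM₀ : 0 < M := by exact_mod_cast hy₀.trans_le hyM
  have hx₀ : 0 ≤ x := by rw [hx]; positivity
  have hx'₀ : 0 ≤ x' := by
    have : y ^ 13 ≤ y ^ 24 := pow_le_pow_right₀ (by linarith) (by norm_num)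
    linarith
  obtain ⟨ρ, hρ, hden⟩ := Real.exists_rat_abs_sub_le_and_den_le (x / (N : ℝ) ^ 2) (pow_pos hM₀ 2)
  refine ⟨ρ.den, ρ.den_pos, hden, fun h hh => ?_⟩
  set D : ℝ := ρ.den * M
  have hD₀ : 0 ≤ D := by positivity
  have hD : D ≤ 8 * y ^ 3 := by
    have : (ρ.den : ℝ) ≤ M ^ 2 := by exact_mod_cast hden
    calc D ≤ (M : ℝ) ^ 2 * M := mul_le_mul_of_nonneg_right this (Nat.cast_nonneg M)
      _ = (M : ℝ) ^ 3 := by ring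
      _ ≤ (2 * y) ^ 3 := by gcongr
      _ = 8 * y ^ 3 := by ring
  have hDN : D ≤ N := by
    calc D ≤ 8 * y ^ 3 := hD
      _ ≤ y ^ 8 * y ^ 3 := by gcongr; nlinarith [pow_le_pow_left₀ (by norm_num) hy 8]
      _ = y ^ 11 := by ring
      _ ≤ N := hN
  have happrox : |x / (N : ℝ) ^ 2 - ρ| * D ≤ 1 / 16 := by
    refine (mul_le_mul_of_nonneg_right hρ hD₀).trans ?_
    rw [div_mul_eq_mul_div, one_mul, div_le_div_iff₀ (by positivity) (by norm_num)]
    have : (16 : ℝ) ≤ M := hy.trans hyM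
    simp only [D]
    push_cast
    nlinarith [mul_nonneg (Nat.cast_nonneg ρ.den : (0 : ℝ) ≤ ρ.den)
      (mul_nonneg (Nat.cast_nonneg M : (0 : ℝ) ≤ M) (sub_nonneg.mpr this))]
  have hcurv : 3 * x * D ^ 2 / (N : ℝ) ^ 3 ≤ 1 / 16 := by
    rw [div_le_div_iff₀ (by positivity) (by norm_num)]
    calc 3 * x * D ^ 2 * 16 ≤ 3 * y ^ 24 * (8 * y ^ 3) ^ 2 * 16 := by rw [hx]; gcongr
      _ = 3072 * y ^ 30 := by ring
      _ ≤ y ^ 3 * y ^ 30 := by gcongr; linarith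
      _ = (y ^ 11) ^ 3 := by ring
      _ ≤ 1 * (N : ℝ) ^ 3 := by rw [one_mul]; gcongr
  have hshift : (x - x') * D / (N : ℝ) ^ 2 ≤ 1 / 8 := by
    rw [div_le_div_iff₀ (by positivity) (by norm_num)]
    calc (x - x') * D * 8 ≤ y ^ 13 * (8 * y ^ 3) * 8 := by gcongr
      _ = 64 * y ^ 16 := by ring
      _ ≤ y ^ 6 * y ^ 16 := by gcongr; nlinarith
      _ = (y ^ 11) ^ 2 := by ring
      _ ≤ 1 * (N : ℝ) ^ 2 := by rw [one_mul]; gcongr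
  have hosc : ∀ n₀ n : ℕ, N ≤ n₀ → n₀ ≤ n → n < N + h →
      |x / n + ρ * (n - n₀) - x / n₀| ≤ 1 / 8 ∧ |(x - x') / n - (x - x') / n₀| ≤ 1 / 8 := by
    intro n₀ n h₀ h₁ h₂
    have h₀' : (N : ℝ) ≤ n₀ := by exact_mod_cast h₀
    have h₁' : (n₀ : ℝ) ≤ n := by exact_mod_cast h₁
    have h₂' : (n : ℝ) ≤ N + D := by
      have : n ≤ N + ρ.den * M := by omega
      simp only [D]
      exact_mod_cast this
    exact ⟨(abs_div_add_mul_sub_div_le hx₀ hN₀ h₀' h₁' h₂' hDN).trans (by linarith),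
      (abs_div_sub_div_le hx'.le hN₀ h₀' h₁' (by linarith)).trans hshift⟩
  refine exists_isGoodPartition_Ico_of_abs_sub_le hx₀ hx'₀ (by exact_mod_cast hN₀) ρ
    (fun n₀ n h₀ h₁ h₂ => (hosc n₀ n h₀ h₁ h₂).1.trans (by norm_num)) fun n₀ n h₀ h₁ h₂ => ?_
  obtain ⟨h₁, h₂⟩ := hosc n₀ n h₀ h₁ h₂
  calc |x' / n + ρ * (n - n₀) - x' / n₀|
      = |(x / n + ρ * (n - n₀) - x / n₀) - ((x - x') / n - (x - x') / n₀)| := by ring_nf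
    _ ≤ 1 / 8 + 1 / 8 := (abs_sub _ _).trans (add_le_add h₁ h₂)
    _ = 1 / 4 := by norm_num

lemma exists_isGoodPartition_Ico_card_le {x x' y : ℝ} (hy : 16 ≤ y) (hx : x = y ^ 24)
    (hx' : 0 < x - x') (hxx' : x - x' ≤ y ^ 13) {A B : ℕ} (hA : y ^ 11 ≤ A)
    (hB : (B : ℝ) ≤ y ^ 12 + 1) :
    ∃ Ps, IsGoodPartition x x' (Ico A B) Ps ∧ (Ps.card : ℝ) ≤ 32 * y ^ 11 := by
  have hy₀ : 0 < y := by linarith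
  have hyM : y ≤ ⌈y⌉₊ := Nat.le_ceil y
  have hMy : (⌈y⌉₊ : ℝ) ≤ 2 * y := (Nat.ceil_lt_add_one hy₀.le).le.trans (by linarith)
  obtain ⟨Ps, hPs, hcard⟩ := exists_isGoodPartition_Ico_of_blocks (K := 16)
    (Nat.ceil_pos.mpr hy₀) (fun N hN => exists_isGoodPartition_block hy hx hx' hxx' hyM hMy N
      (hA.trans (by exact_mod_cast hN))) B A le_rfl
  refine ⟨Ps, hPs, le_of_mul_le_mul_right ?_ hy₀⟩
  have hBA : ((B - A : ℕ) : ℝ) ≤ y ^ 12 + 1 := le_trans (by exact_mod_cast Nat.sub_le B A) hB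
  have hcard' : (Ps.card : ℝ) * ⌈y⌉₊ ≤ 16 * (B - A : ℕ) + 16 * (⌈y⌉₊ : ℝ) ^ 3 := by
    exact_mod_cast hcard
  calc (Ps.card : ℝ) * y ≤ Ps.card * ⌈y⌉₊ := by gcongr
    _ ≤ 16 * (y ^ 12 + 1) + 16 * (2 * y) ^ 3 := hcard'.trans (by gcongr)
    _ ≤ 32 * y ^ 11 * y := by
      have h₃ : 16 ≤ y ^ 3 := le_self_pow₀ (by linarith) (by norm_num) |>.trans' hy
      have h₉ : 16 ≤ y ^ 9 := le_self_pow₀ (by linarith) (by norm_num) |>.trans' hy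
      have h₁₂ : 16 * y ^ 3 ≤ y ^ 12 := by
        calc 16 * y ^ 3 ≤ y ^ 9 * y ^ 3 := by gcongr
          _ = y ^ 12 := by ring
      linarith

lemma filter_Icc_le_eq_Ico_ceil {z : ℝ} (hz : 0 < z) (B : ℕ) :
    (Icc 1 B).filter (fun n : ℕ => z ≤ n) = Ico ⌈z⌉₊ (B + 1) := by
  have := Nat.ceil_pos.mpr hz
  ext n
  simp only [mem_filter, mem_Icc, mem_Ico, ← Nat.ceil_le]
  constructor <;> rintro ⟨h₁, h₂⟩
  · exact ⟨h₂, by omega⟩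
  · exact ⟨⟨by omega, by omega⟩, h₁⟩

/-- Complexity of the hyperbola, II: there are absolute constants `c₀, C, x₀ > 0` such that
for `0 < c < c₀`, `x ≥ x₀` and `0 < x − x' ≤ x^{1/2+c}`, the set
`{n ∈ ℕ : x^{1/2−c} ≤ n ≤ √x}` can be partitioned into at most `C x^{1/2−c₀}` arithmetic
progressions, on each of which `n ↦ ⌊x/n⌋` is linear (with rational coefficients) and
`n ↦ ⌊x/n⌋ − ⌊x'/n⌋` is constant. -/
theorem hyperbola_partition_II :
    ∃ c₀ C x₀ : ℝ, 0 < c₀ ∧ 0 < C ∧ 0 < x₀ ∧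
      ∀ c x x' : ℝ, 0 < c → c < c₀ → x₀ ≤ x → 0 < x - x' → x - x' ≤ x ^ ((1 : ℝ) / 2 + c) →
        ∃ Ps : Finset (Finset ℕ),
          (∀ P ∈ Ps, ∃ n₀ q L : ℕ, 1 ≤ n₀ ∧ 1 ≤ q ∧
            P = (Finset.range (L + 1)).image (fun l => n₀ + l * q)) ∧
          (∀ P ∈ Ps, ∀ P' ∈ Ps, P ≠ P' → Disjoint P P') ∧
          Ps.biUnion id = (Finset.Icc 1 ⌊Real.sqrt x⌋₊).filter
            (fun n : ℕ => x ^ ((1 : ℝ) / 2 - c) ≤ (n : ℝ)) ∧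
          (Ps.card : ℝ) ≤ C * x ^ ((1 : ℝ) / 2 - c₀) ∧
          (∀ P ∈ Ps, ∃ u v : ℚ, ∀ n ∈ P, (⌊x / (n : ℝ)⌋ : ℚ) = u * (n : ℚ) + v) ∧
          (∀ P ∈ Ps, ∃ K : ℤ, ∀ n ∈ P, ⌊x / (n : ℝ)⌋ - ⌊x' / (n : ℝ)⌋ = K) := by
  refine ⟨1 / 24, 32, 16 ^ 24, by norm_num, by norm_num, by positivity,
    fun c x x' hc hc₀ hx hx' hxx' => ?_⟩
  have hx₁ : 1 ≤ x := le_trans (by norm_num) hx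
  set y := x ^ ((1 : ℝ) / 24)
  have hpow (k : ℕ) : y ^ k = x ^ ((1 : ℝ) / 24 * k) :=
    (Real.rpow_mul_natCast (by linarith) _ _).symm
  have hxy : x = y ^ 24 := by rw [hpow]; norm_num
  have hy : 16 ≤ y := le_of_pow_le_pow_left₀ (by norm_num) (by positivity) (hxy ▸ hx)
  have hsqrt : Real.sqrt x = y ^ 12 := by rw [Real.sqrt_eq_rpow, hpow]; norm_num
  have hlow : y ^ 11 ≤ x ^ ((1 : ℝ) / 2 - c) := by
    rw [hpow]; exact Real.rpow_le_rpow_of_exponent_le hx₁ (by push_cast; linarith)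
  have hup : x ^ ((1 : ℝ) / 2 + c) ≤ y ^ 13 := by
    rw [hpow]; exact Real.rpow_le_rpow_of_exponent_le hx₁ (by push_cast; linarith)
  obtain ⟨Ps, hPs, hcard⟩ := exists_isGoodPartition_Ico_card_le hy hxy hx' (hxx'.trans hup)
    (hlow.trans (Nat.le_ceil _)) (B := ⌊Real.sqrt x⌋₊ + 1)
    (by have := Nat.floor_le (Real.sqrt_nonneg x); push_cast; linarith)
  refine ⟨Ps, fun P hP => (hPs.good P hP).isAP, fun P hP P' hP' => hPs.pairwiseDisjoint hP hP',
    ?_, ?_, fun P hP => (hPs.good P hP).floor_affine, fun P hP => (hPs.good P hP).floor_sub_const⟩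
  · rw [hPs.biUnion_eq, filter_Icc_le_eq_Ico_ceil (by positivity)]
  · rwa [show x ^ ((1 : ℝ) / 2 - 1 / 24) = y ^ 11 by rw [hpow]; norm_num]
end
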